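/- arXiv:1610.02563 — 6 statements merged into one kernel-verified Lean document; each statement's English description precedes it below -/
import Mathlib

section
/- Given b_* > 1, there exist constants C ≥ 1 and N ≥ 1 such that: (i) for every b ∈ [b_*, 2] and n ≥ N, if φ_j(b) ≠ 0 for all j with 1 ≤ j < n, then the function φ_n is differentiable at b; and (ii) if V ⊆ [b_*, 2] is an interval on which φ_n is differentiable, then C^{-1} b₀^n ≤ |φ_n'(b)| ≤ C b₀^n for all b, b₀ ∈ V. -/
open Filter Set

/-- The tent map `T_b(x) = 1 − b|x|`. -/
noncomputable def tent (b : ℝ) : ℝ → ℝ := fun x => 1 - b * |x|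

/-- `φ_n(b) = T_b^n(1)`, the `n`-th iterate of the critical value as a function of `b`. -/
noncomputable def φ (n : ℕ) (b : ℝ) : ℝ := (tent b)^[n] 1

/-!
Where no earlier iterate vanishes, the chain rule gives the derivative `φ' n` of `φ n` through
`φ' (n + 1) = -|φ n| - b * sign (φ n) * φ' n`, hence
`|φ' n b| ≤ 1 + b + ⋯ + b ^ (n - 1) ≤ b ^ n / (b - 1)`.

For the lower bound, when `b ≥ 1.39` the quantity `b * φ' n b + φ n b` is multiplied by `±b` at each
step up to the error `φ (n + 1) b`, which a Lyapunov function absorbs: `|φ' n b| ≥ b ^ n / 100`.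
Below `1.39` we have `b ^ 2 < 2` and the renormalisation `φ (2k+1) b = (1 - b) * φ k (b ^ 2)`, which
transfers a bound `c * b ^ n - D * |φ n b| ≤ |φ' n b|` from `[a ^ 2, 2]` to `[a, 2]`; finitely many
square roots reach any `b_* > 1`.

At the first zero of `φ j b` this bound gives `φ' j b ≠ 0`, so `|φ j|` and then every later `φ n`
have a corner at `b`. Hence on an interval `V` where `φ n` is differentiable no earlier iterate
vanishes, and `|φ' n| ≥ c / 2 * b_* ^ n` on `V` for large `n`. Since `|φ n| ≤ 1`, the mean value
theorem makes `V` shorter than `4 / (c * b_* ^ n)`, so `b ^ n` and `b₀ ^ n` are comparable on `V`.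
-/

theorem abs_sign_of_ne_zero {x : ℝ} (hx : x ≠ 0) : |(SignType.sign x : ℝ)| = 1 := by
  rcases hx.lt_or_gt with hx | hx <;> simp [sign_neg, sign_pos, hx]

theorem φ_zero (b : ℝ) : φ 0 b = 1 := rfl

theorem φ_succ (n : ℕ) (b : ℝ) : φ (n + 1) b = 1 - b * |φ n b| := by
  simp only [φ, Function.iterate_succ_apply', tent]

theorem φ_succ_eq (n : ℕ) : φ (n + 1) = fun b => 1 - b * |φ n b| :=
  funext (φ_succ n)

theorem abs_φ_le_one {b : ℝ} (hb₀ : 0 ≤ b) (hb₂ : b ≤ 2) (n : ℕ) : |φ n b| ≤ 1 := by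
  induction n with
  | zero => simp [φ_zero]
  | succ n ih =>
    rw [φ_succ, abs_le]
    constructor <;> nlinarith [abs_nonneg (φ n b)]

noncomputable def φ' : ℕ → ℝ → ℝ
  | 0, _ => 0
  | n + 1, b => -|φ n b| - b * SignType.sign (φ n b) * φ' n b

theorem φ'_succ (n : ℕ) (b : ℝ) :
    φ' (n + 1) b = -|φ n b| - b * SignType.sign (φ n b) * φ' n b := rfl

theorem hasDerivAt_φ {n : ℕ} {b : ℝ} (h : ∀ j < n, φ j b ≠ 0) :
    HasDerivAt (φ n) (φ' n b) b := by
  induction n with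
  | zero => exact hasDerivAt_const b 1
  | succ n ih =>
    have habs : HasDerivAt (fun x => |φ n x|) (SignType.sign (φ n b) * φ' n b) b :=
      (hasDerivAt_abs (h n n.lt_succ_self)).comp b (ih fun j hj => h j (hj.trans n.lt_succ_self))
    rw [φ_succ_eq]
    refine (((hasDerivAt_id' b).mul habs).const_sub 1).congr_deriv ?_
    rw [φ'_succ]
    ring

theorem abs_φ'_le {b : ℝ} (hb₀ : 0 ≤ b) (hb₂ : b ≤ 2) (n : ℕ) :
    |φ' n b| ≤ ∑ i ∈ Finset.range n, b ^ i := by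
  induction n with
  | zero => simp [φ']
  | succ n ih =>
    have hsign : |(SignType.sign (φ n b) : ℝ)| ≤ 1 := by
      rcases lt_trichotomy (φ n b) 0 with h | h | h <;> simp [sign_neg, sign_pos, h]
    calc |φ' (n + 1) b| ≤ |(-|φ n b|)| + |b * SignType.sign (φ n b) * φ' n b| := abs_sub _ _
      _ = |φ n b| + b * |(SignType.sign (φ n b) : ℝ)| * |φ' n b| := by
          rw [abs_neg, abs_abs, abs_mul, abs_mul, abs_of_nonneg hb₀]
      _ ≤ 1 + b * 1 * ∑ i ∈ Finset.range n, b ^ i := by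
          gcongr
          exact abs_φ_le_one hb₀ hb₂ n
      _ = ∑ i ∈ Finset.range (n + 1), b ^ i := by
          rw [Finset.sum_range_succ', Finset.mul_sum]
          simp [pow_succ, mul_comm, add_comm]

theorem abs_φ'_le_pow_div {b : ℝ} (hb₁ : 1 < b) (hb₂ : b ≤ 2) (n : ℕ) :
    |φ' n b| ≤ b ^ n / (b - 1) := by
  rw [le_div_iff₀ (sub_pos.2 hb₁)]
  have := mul_le_mul_of_nonneg_right (abs_φ'_le (by linarith) hb₂ n) (sub_pos.2 hb₁).le
  linarith [geom_sum_mul b n]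

theorem mul_abs_φ'_sub_le {n : ℕ} {b : ℝ} (hb : 0 ≤ b) (h : φ n b ≠ 0) :
    b * |φ' n b| - |φ n b| ≤ |φ' (n + 1) b| := by
  have := abs_sub_abs_le_abs_sub (b * SignType.sign (φ n b) * φ' n b) (-|φ n b|)
  rwa [abs_mul, abs_mul, abs_sign_of_ne_zero h, abs_of_nonneg hb, mul_one, abs_neg, abs_abs,
    abs_sub_comm, ← φ'_succ] at this

theorem mul_φ'_add_φ_succ (n : ℕ) (b : ℝ) :
    b * φ' (n + 1) b + φ (n + 1) b =
      φ (n + 1) b - b * SignType.sign (φ n b) * (b * φ' n b + φ n b) := by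
  rw [φ'_succ]
  linear_combination b * sign_mul_self (φ n b)

/-- The weights are chosen so that the error term `|φ (n + 1) b|` of one step of
`mul_φ'_add_φ_succ` is absorbed, see `mul_potential_le`. -/
noncomputable def potential (n : ℕ) (b : ℝ) : ℝ :=
  |b * φ' n b + φ n b| + (2 - b) / 2 * |φ n b| - b / (2 * (b - 1))

theorem mul_potential_le {n : ℕ} {b : ℝ} (hb₁ : 1 < b) (hb₂ : b ≤ 2) (h : φ n b ≠ 0) :
    b * potential n b ≤ potential (n + 1) b := by
  have hexpand :
      b * |b * φ' n b + φ n b| - |φ (n + 1) b| ≤ |b * φ' (n + 1) b + φ (n + 1) b| := by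
    have := abs_sub_abs_le_abs_sub (b * SignType.sign (φ n b) * (b * φ' n b + φ n b)) (φ (n + 1) b)
    rwa [abs_mul, abs_mul, abs_sign_of_ne_zero h, abs_of_pos (by linarith : 0 < b), mul_one,
      abs_sub_comm, ← mul_φ'_add_φ_succ] at this
  have hA : b / (2 * (b - 1)) * (2 * (b - 1)) = b := div_mul_cancel₀ b (by linarith)
  have hx₀ := abs_nonneg (φ n b)
  have hx₁ := abs_φ_le_one (by linarith) hb₂ n
  unfold potential
  rw [φ_succ] at hexpand ⊢
  rcases abs_cases (1 - b * |φ n b|) with ⟨he, -⟩ | ⟨he, -⟩ <;> rw [he] at hexpand ⊢ <;>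
    nlinarith [mul_nonneg (mul_nonneg (by linarith : (0 : ℝ) ≤ b) hx₀)
      (by linarith : (0 : ℝ) ≤ b - 1), mul_nonneg (by linarith : (0 : ℝ) ≤ b) hx₀]

theorem pow_div_le_potential {b : ℝ} (hb₁ : 1.39 ≤ b) (hb₂ : b ≤ 2) {n : ℕ} (hn : 1 ≤ n)
    (h : ∀ j < n, φ j b ≠ 0) : b ^ n / 50 ≤ potential n b := by
  induction n, hn using Nat.le_induction with
  | base =>
    have hA : b / (2 * (b - 1)) * (2 * (b - 1)) = b := div_mul_cancel₀ b (by linarith)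
    simp only [potential, φ', φ_succ, φ_zero]
    rw [abs_one, mul_one, abs_of_nonpos (by linarith : 1 - b ≤ 0), abs_of_nonpos (by linarith)]
    nlinarith [sq_nonneg (b - 1.39), sq_nonneg (2 - b)]
  | succ n hn ih =>
    calc b ^ (n + 1) / 50 = b * (b ^ n / 50) := by ring
      _ ≤ b * potential n b := by gcongr; exact ih fun j hj => h j (by omega)
      _ ≤ potential (n + 1) b := mul_potential_le (by linarith) hb₂ (h n (by omega))

theorem pow_div_le_abs_φ' {b : ℝ} (hb₁ : 1.39 ≤ b) (hb₂ : b ≤ 2) {n : ℕ} (hn : 1 ≤ n)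
    (h : ∀ j < n, φ j b ≠ 0) : b ^ n / 100 ≤ |φ' n b| := by
  have hpot := pow_div_le_potential hb₁ hb₂ hn h
  have hA : b / (2 * (b - 1)) * (2 * (b - 1)) = b := div_mul_cancel₀ b (by linarith)
  have hx₁ := abs_φ_le_one (by linarith) hb₂ n
  have htri : |b * φ' n b + φ n b| ≤ b * |φ' n b| + |φ n b| := by
    simpa [abs_mul, abs_of_pos (by linarith : 0 < b)] using abs_add_le (b * φ' n b) (φ n b)
  have hweight : (4 - b) / 2 * |φ n b| ≤ b / (2 * (b - 1)) := by
    nlinarith [sq_nonneg (2 - b), abs_nonneg (φ n b)]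
  have hlow : b ^ n / 50 ≤ b * |φ' n b| := by unfold potential at hpot; linarith
  nlinarith [pow_pos (by linarith : (0 : ℝ) < b) n]

section Renormalization

variable {b : ℝ}

theorem φ_odd (hb₁ : 1 ≤ b) (hb₂ : b ^ 2 ≤ 2) (k : ℕ) :
    φ (2 * k + 1) b = (1 - b) * φ k (b ^ 2) := by
  induction k with
  | zero => simp [φ_succ, φ_zero]
  | succ k ih =>
    have hy := abs_φ_le_one (by positivity) hb₂ k
    rw [show 2 * (k + 1) + 1 = 2 * k + 1 + 1 + 1 by ring, φ_succ, φ_succ, ih, φ_succ,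
      abs_mul, abs_of_nonpos (by linarith : 1 - b ≤ 0), abs_of_nonneg]
    · ring
    · nlinarith [abs_nonneg (φ k (b ^ 2))]

theorem φ_even (hb₁ : 1 ≤ b) (hb₂ : b ^ 2 ≤ 2) (k : ℕ) :
    φ (2 * k + 2) b = 1 - b * (b - 1) * |φ k (b ^ 2)| := by
  rw [φ_succ, φ_odd hb₁ hb₂, abs_mul, abs_of_nonpos (by linarith : 1 - b ≤ 0)]
  ring

theorem φ_even_pos (hb₁ : 1 ≤ b) (hb₂ : b ^ 2 ≤ 2) (k : ℕ) : 0 < φ (2 * k + 2) b := by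
  have hy := abs_φ_le_one (by positivity) hb₂ k
  have hb : 0 ≤ b * (b - 1) := by nlinarith
  rw [φ_even hb₁ hb₂]
  nlinarith [mul_le_mul_of_nonneg_left hy hb]

theorem abs_φ_odd_le_φ_even (hb₁ : 1 ≤ b) (hb₂ : b ^ 2 ≤ 2) (k : ℕ) :
    |φ (2 * k + 1) b| ≤ φ (2 * k + 2) b := by
  have hy := abs_φ_le_one (by positivity) hb₂ k
  rw [φ_even hb₁ hb₂, φ_odd hb₁ hb₂, abs_mul, abs_of_nonpos (by linarith : 1 - b ≤ 0)]
  nlinarith [abs_nonneg (φ k (b ^ 2))]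

theorem φ'_odd (hb₁ : 1 < b) (hb₂ : b ^ 2 ≤ 2) (k : ℕ) :
    φ' (2 * k + 1) b = -φ k (b ^ 2) + 2 * b * (1 - b) * φ' k (b ^ 2) := by
  induction k with
  | zero => simp [φ', φ_zero]
  | succ k ih =>
    set y := φ k (b ^ 2)
    have hpos := φ_even_pos hb₁.le hb₂ k
    have hodd : φ (2 * k + 1) b = (1 - b) * y := φ_odd hb₁.le hb₂ k
    have hsign : (SignType.sign (φ (2 * k + 1) b) : ℝ) = -SignType.sign y := by
      rw [hodd, sign_mul, sign_neg (by linarith : 1 - b < 0)]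
      simp
    have habs : |φ (2 * k + 1) b| = (b - 1) * |y| := by
      rw [hodd, abs_mul, abs_of_nonpos (by linarith : 1 - b ≤ 0)]
      ring
    have heven : φ' (2 * k + 2) b =
        -|φ (2 * k + 1) b| - b * SignType.sign (φ (2 * k + 1) b) * φ' (2 * k + 1) b :=
      φ'_succ (2 * k + 1) b
    rw [show 2 * (k + 1) + 1 = 2 * k + 2 + 1 by ring, φ'_succ, sign_pos hpos, SignType.coe_one,
      abs_of_pos hpos, heven, hsign, habs, ih, φ_even hb₁.le hb₂, φ'_succ, φ_succ]
    linear_combination b ^ 2 * sign_mul_self y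

end Renormalization

/-- The weight `|φ n b|` of the error makes the bound also say that `φ' n b ≠ 0` at the first
zero of `φ · b`. -/
def DerivLowerBound (c D a : ℝ) : Prop :=
  ∀ b ∈ Icc a 2, ∀ n, (∀ j < n, φ j b ≠ 0) → c * b ^ n - D * |φ n b| ≤ |φ' n b|

namespace DerivLowerBound

variable {a b c D : ℝ}

theorem mono {c' D' a' : ℝ} (h : DerivLowerBound c D a) (hc : c' ≤ c) (hD : D ≤ D')
    (ha : a ≤ a') (ha' : 0 ≤ a') : DerivLowerBound c' D' a' := by
  intro b hb n hreg
  have := h b ⟨ha.trans hb.1, hb.2⟩ n hreg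
  have := pow_nonneg (ha'.trans hb.1) n
  nlinarith [abs_nonneg (φ n b)]

theorem base : DerivLowerBound (1 / 100) (1 / 100) 1.39 := by
  intro b ⟨hb₁, hb₂⟩ n hreg
  rcases Nat.eq_zero_or_pos n with rfl | hn
  · simp [φ_zero]
  · have := pow_div_le_abs_φ' hb₁ hb₂ hn hreg
    nlinarith [abs_nonneg (φ n b)]

theorem le_abs_φ'_odd (h : DerivLowerBound c D (a ^ 2)) (ha : 1 < a) (hc : 0 ≤ c) (hD : 0 ≤ D)
    (hab : a ≤ b) (hb : b ^ 2 ≤ 2) {k : ℕ} (hreg : ∀ j < 2 * k + 1, φ j b ≠ 0) :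
    2 * (a - 1) * c * b ^ (2 * k + 1) - (4 * D + 1 / (a - 1)) * |φ (2 * k + 1) b| ≤
      |φ' (2 * k + 1) b| := by
  have hb₁ : 1 < b := ha.trans_le hab
  have hb₂ : b ≤ 2 := by nlinarith
  set y := φ k (b ^ 2)
  have hreg' : ∀ j < k, φ j (b ^ 2) ≠ 0 := fun j hj hzero =>
    hreg (2 * j + 1) (by omega) (by rw [φ_odd hb₁.le hb, hzero, mul_zero])
  have hy' : c * (b ^ 2) ^ k - D * |y| ≤ |φ' k (b ^ 2)| :=
    h (b ^ 2) ⟨pow_le_pow_left₀ (by linarith) hab 2, hb⟩ k hreg'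
  have htri : 2 * b * (b - 1) * |φ' k (b ^ 2)| - |y| ≤ |φ' (2 * k + 1) b| := by
    have := abs_sub_abs_le_abs_sub (2 * b * (1 - b) * φ' k (b ^ 2)) y
    rw [abs_mul, abs_mul, abs_of_nonpos (by linarith : 1 - b ≤ 0),
      abs_of_pos (by linarith : 0 < 2 * b)] at this
    rw [φ'_odd hb₁ hb, neg_add_eq_sub]
    linarith
  have habs : |φ (2 * k + 1) b| = (b - 1) * |y| := by
    rw [φ_odd hb₁.le hb, abs_mul, abs_of_nonpos (by linarith : 1 - b ≤ 0)]
    ring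
  have hinv : |y| ≤ (b - 1) / (a - 1) * |y| :=
    le_mul_of_one_le_left (abs_nonneg y) ((one_le_div (by linarith)).2 (by linarith))
  have hexp : 2 * b * (b - 1) * (c * (b ^ 2) ^ k) = 2 * (b - 1) * c * b ^ (2 * k + 1) := by ring
  have hc' : 2 * (a - 1) * c * b ^ (2 * k + 1) ≤ 2 * (b - 1) * c * b ^ (2 * k + 1) := by gcongr
  have hD' : 2 * b * (b - 1) * (D * |y|) ≤ 4 * D * ((b - 1) * |y|) := by
    have : 0 ≤ D * ((b - 1) * |y|) := by positivity
    nlinarith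
  have hmul := mul_le_mul_of_nonneg_left hy' (by nlinarith : 0 ≤ 2 * b * (b - 1))
  have hsplit : (4 * D + 1 / (a - 1)) * ((b - 1) * |y|) =
      4 * D * ((b - 1) * |y|) + (b - 1) / (a - 1) * |y| := by ring
  rw [habs, hsplit]
  linarith

theorem le_abs_φ'_even (hb₁ : 1 ≤ b) (hb₂ : b ^ 2 ≤ 2) (hD : 0 ≤ D) {k : ℕ}
    (hne : φ (2 * k + 1) b ≠ 0)
    (hodd : c * b ^ (2 * k + 1) - D * |φ (2 * k + 1) b| ≤ |φ' (2 * k + 1) b|) :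
    c * b ^ (2 * k + 2) - (2 * D + 1) * |φ (2 * k + 2) b| ≤ |φ' (2 * k + 2) b| := by
  have hstep : b * |φ' (2 * k + 1) b| - |φ (2 * k + 1) b| ≤ |φ' (2 * k + 2) b| :=
    mul_abs_φ'_sub_le (by linarith) hne
  have hle := abs_φ_odd_le_φ_even hb₁ hb₂ k
  have hb2 : b ≤ 2 := by nlinarith
  have hexp : b * (c * b ^ (2 * k + 1)) = c * b ^ (2 * k + 2) := by ring
  have hD' : (b * D + 1) * |φ (2 * k + 1) b| ≤ (2 * D + 1) * φ (2 * k + 2) b := by gcongr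
  rw [abs_of_pos (φ_even_pos hb₁ hb₂ k)]
  nlinarith [mul_le_mul_of_nonneg_left hodd (by linarith : 0 ≤ b)]

theorem of_sq (h : DerivLowerBound c D (a ^ 2)) (ha : 1 < a) (hc : 0 ≤ c) (hD : 0 ≤ D) :
    DerivLowerBound (min (1 / 100) (2 * (a - 1) * c)) (2 * (4 * D + 1 / (a - 1)) + 1) a := by
  set D₁ := 4 * D + 1 / (a - 1)
  have hD₁ : 0 ≤ D₁ := by have := one_div_pos.2 (sub_pos.2 ha); positivity
  have hmin : min (1 / 100) (2 * (a - 1) * c) ≤ 2 * (a - 1) * c := min_le_right _ _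
  intro b hb n hreg
  by_cases hbig : 1.39 ≤ b
  · exact base.mono (min_le_left _ _) (by linarith) hbig (by linarith) b ⟨le_rfl, hb.2⟩ n hreg
  have hb₁ : 1 < b := ha.trans_le hb.1
  have hb₂ : b ^ 2 ≤ 2 := by nlinarith
  have hodd : ∀ k, 2 * k + 1 ≤ n →
      min (1 / 100) (2 * (a - 1) * c) * b ^ (2 * k + 1) - D₁ * |φ (2 * k + 1) b| ≤
        |φ' (2 * k + 1) b| := fun k hk => by
    have := h.le_abs_φ'_odd (k := k) ha hc hD hb.1 hb₂ fun j hj => hreg j (by omega)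
    have := pow_nonneg (zero_le_one.trans hb₁.le) (2 * k + 1)
    nlinarith
  obtain ⟨k, rfl | rfl⟩ := n.even_or_odd'
  · rcases k with _ | k
    · simp only [mul_zero, pow_zero, φ_zero, φ', abs_one, abs_zero, mul_one]
      linarith [min_le_left (1 / 100 : ℝ) (2 * (a - 1) * c)]
    · exact le_abs_φ'_even hb₁.le hb₂ hD₁ (hreg (2 * k + 1) (by omega)) (hodd k (by omega))
  · have := hodd k le_rfl
    nlinarith [abs_nonneg (φ (2 * k + 1) b)]

theorem exists_of_one_lt (ha : 1 < a) : ∃ c D, 0 < c ∧ 0 ≤ D ∧ DerivLowerBound c D a := by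
  obtain ⟨m, hm⟩ := pow_unbounded_of_one_lt 1.39 ha
  have hm' : 1.39 ≤ a ^ 2 ^ m := hm.le.trans (pow_le_pow_right₀ ha.le Nat.lt_two_pow_self.le)
  clear hm
  induction m generalizing a with
  | zero =>
    exact ⟨1 / 100, 1 / 100, by norm_num, by norm_num,
      base.mono le_rfl le_rfl (by simpa using hm') (by linarith)⟩
  | succ m ih =>
    obtain ⟨c, D, hc, hD, h⟩ := ih (one_lt_pow₀ ha two_ne_zero) (by rwa [← pow_mul, ← pow_succ'])
    exact ⟨_, _, lt_min (by norm_num) (by nlinarith), by positivity, h.of_sq ha hc.le hD⟩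

end DerivLowerBound

def HasCornerAt (f : ℝ → ℝ) (b : ℝ) : Prop :=
  ∃ L R, HasDerivWithinAt f L (Iic b) b ∧ HasDerivWithinAt f R (Ici b) b ∧ L ≠ R

section Corner

variable {f : ℝ → ℝ} {b L : ℝ}

theorem HasCornerAt.not_differentiableAt (h : HasCornerAt f b) : ¬DifferentiableAt ℝ f b := by
  intro hd
  obtain ⟨L, R, hL, hR, hne⟩ := h
  exact hne <| ((uniqueDiffWithinAt_Iic b).eq_deriv _ hL hd.hasDerivAt.hasDerivWithinAt).trans
    ((uniqueDiffWithinAt_Ici b).eq_deriv _ hR hd.hasDerivAt.hasDerivWithinAt).symm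

theorem HasDerivWithinAt.abs_Ici_of_eq_zero (hf : HasDerivWithinAt f L (Ici b) b)
    (h₀ : f b = 0) : HasDerivWithinAt (fun x => |f x|) |L| (Ici b) b := by
  rw [hasDerivWithinAt_iff_tendsto_slope, Ici_sdiff_left] at hf ⊢
  refine ((continuous_abs.tendsto L).comp hf).congr' ?_
  filter_upwards [self_mem_nhdsWithin] with x hx
  rw [Function.comp_apply, slope_def_field, slope_def_field, h₀, sub_zero, abs_zero, sub_zero,
    abs_div, abs_of_pos (sub_pos.2 hx)]

theorem HasDerivWithinAt.abs_Iic_of_eq_zero (hf : HasDerivWithinAt f L (Iic b) b)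
    (h₀ : f b = 0) : HasDerivWithinAt (fun x => |f x|) (-|L|) (Iic b) b := by
  rw [hasDerivWithinAt_iff_tendsto_slope, Iic_sdiff_right] at hf ⊢
  refine ((continuous_abs.tendsto L).comp hf).neg.congr' ?_
  filter_upwards [self_mem_nhdsWithin] with x hx
  rw [Function.comp_apply, slope_def_field, slope_def_field, h₀, sub_zero, abs_zero, sub_zero,
    abs_div, abs_of_neg (sub_neg.2 hx), div_neg, neg_neg]

theorem HasCornerAt.abs (h : HasCornerAt f b) : HasCornerAt (fun x => |f x|) b := by
  obtain ⟨L, R, hL, hR, hne⟩ := h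
  by_cases h₀ : f b = 0
  · refine ⟨-|L|, |R|, hL.abs_Iic_of_eq_zero h₀, hR.abs_Ici_of_eq_zero h₀, fun heq => hne ?_⟩
    have hL₀ : L = 0 := abs_eq_zero.1 (by linarith [abs_nonneg L, abs_nonneg R])
    have hR₀ : R = 0 := abs_eq_zero.1 (by linarith [abs_nonneg L, abs_nonneg R])
    rw [hL₀, hR₀]
  · have hsign : (SignType.sign (f b) : ℝ) ≠ 0 := by
      rw [← abs_pos, abs_sign_of_ne_zero h₀]
      exact one_pos
    exact ⟨_, _, (hasDerivAt_abs h₀).comp_hasDerivWithinAt b hL,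
      (hasDerivAt_abs h₀).comp_hasDerivWithinAt b hR, fun heq => hne (mul_left_cancel₀ hsign heq)⟩

theorem HasDerivAt.hasCornerAt_abs (hf : HasDerivAt f L b) (h₀ : f b = 0) (hL : L ≠ 0) :
    HasCornerAt (fun x => |f x|) b :=
  ⟨-|L|, |L|, hf.hasDerivWithinAt.abs_Iic_of_eq_zero h₀, hf.hasDerivWithinAt.abs_Ici_of_eq_zero h₀,
    by linarith [abs_pos.2 hL]⟩

theorem HasCornerAt.one_sub_mul (hb : b ≠ 0) (h : HasCornerAt f b) :
    HasCornerAt (fun x => 1 - x * f x) b := by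
  obtain ⟨L, R, hL, hR, hne⟩ := h
  refine ⟨_, _, ((hasDerivWithinAt_id b _).mul hL).const_sub 1,
    ((hasDerivWithinAt_id b _).mul hR).const_sub 1, fun heq => hne ?_⟩
  simp only [id, neg_inj, add_right_inj] at heq
  exact mul_left_cancel₀ hb heq

end Corner

theorem hasCornerAt_φ {j m : ℕ} {b L : ℝ} (hb : b ≠ 0) (hd : HasDerivAt (φ j) L b)
    (h₀ : φ j b = 0) (hL : L ≠ 0) (hjm : j < m) : HasCornerAt (φ m) b := by
  induction m, hjm using Nat.le_induction with
  | base => rw [φ_succ_eq]; exact (hd.hasCornerAt_abs h₀ hL).one_sub_mul hb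
  | succ m _ ih => rw [φ_succ_eq]; exact ih.abs.one_sub_mul hb

theorem DerivLowerBound.φ_ne_zero_of_differentiableAt {c D a b : ℝ} {n : ℕ}
    (h : DerivLowerBound c D a) (hc : 0 < c) (ha : 0 < a) (hb : b ∈ Icc a 2)
    (hd : DifferentiableAt ℝ (φ n) b) : ∀ j < n, φ j b ≠ 0 := by
  have hb₀ : 0 < b := ha.trans_le hb.1
  intro j hj
  induction j using Nat.strong_induction_on with
  | _ j ih =>
    intro h₀
    have hreg : ∀ i < j, φ i b ≠ 0 := fun i hi => ih i hi (hi.trans hj)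
    have hL : φ' j b ≠ 0 := by
      have hlow := h b hb j hreg
      rw [h₀, abs_zero, mul_zero, sub_zero] at hlow
      exact abs_pos.1 (lt_of_lt_of_le (by positivity) hlow)
    exact (hasCornerAt_φ hb₀.ne' (hasDerivAt_φ hreg) h₀ hL hj).not_differentiableAt hd

theorem DerivLowerBound.abs_deriv_φ_mem_Icc {c D bs x : ℝ} {n : ℕ} (h : DerivLowerBound c D bs)
    (hbs : 1 < bs) (hc : 0 < c) (hn : 2 * D ≤ c * bs ^ n) (hx : x ∈ Icc bs 2)
    (hd : DifferentiableAt ℝ (φ n) x) :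
    |deriv (φ n) x| ∈ Icc (c / 2 * x ^ n) (x ^ n / (bs - 1)) := by
  have hreg := h.φ_ne_zero_of_differentiableAt hc (by linarith) hx hd
  have hx₁ : 1 < x := hbs.trans_le hx.1
  rw [(hasDerivAt_φ hreg).deriv]
  constructor
  · have hlow := h x hx n hreg
    have hφ := abs_φ_le_one (by linarith) hx.2 n
    have hpow : bs ^ n ≤ x ^ n := pow_le_pow_left₀ (by linarith) hx.1 n
    have herr : D * |φ n x| ≤ c / 2 * x ^ n := by
      rcases le_total 0 D with hD | hD
      · nlinarith [mul_le_mul_of_nonneg_left hφ hD]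
      · nlinarith [mul_nonpos_of_nonpos_of_nonneg hD (abs_nonneg (φ n x)),
          pow_pos (by linarith : (0 : ℝ) < x) n]
    linarith
  · exact (abs_φ'_le_pow_div hx₁ hx.2 n).trans
      (div_le_div_of_nonneg_left (by positivity) (by linarith) (by linarith [hx.1]))

theorem mul_sub_le_abs_sub_of_le_abs_deriv {f : ℝ → ℝ} {x y m : ℝ} (hyx : y ≤ x)
    (hf : ∀ t ∈ Icc y x, DifferentiableAt ℝ f t) (hm : ∀ t ∈ Icc y x, m ≤ |deriv f t|) :
    m * (x - y) ≤ |f x - f y| := by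
  rcases hyx.eq_or_lt with rfl | hlt
  · simp
  obtain ⟨t, ht, hslope⟩ := exists_deriv_eq_slope f hlt
    (fun t ht => (hf t ht).continuousAt.continuousWithinAt)
    (fun t ht => (hf t (Ioo_subset_Icc_self ht)).differentiableWithinAt)
  have := hm t (Ioo_subset_Icc_self ht)
  rwa [hslope, abs_div, abs_of_pos (sub_pos.2 hlt), le_div_iff₀ (sub_pos.2 hlt)] at this

theorem pow_le_exp_mul_pow {x y δ : ℝ} (hx : 0 ≤ x) (hy : 0 < y) (hxy : x ≤ y + δ) (n : ℕ) :
    x ^ n ≤ Real.exp (n * δ / y) * y ^ n := by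
  have hexp : y + δ ≤ y * Real.exp (δ / y) := by
    have := mul_le_mul_of_nonneg_left (Real.add_one_le_exp (δ / y)) hy.le
    rwa [mul_add, mul_div_cancel₀ _ hy.ne', mul_one, add_comm] at this
  calc x ^ n ≤ (y * Real.exp (δ / y)) ^ n := pow_le_pow_left₀ hx (hxy.trans hexp) n
    _ = Real.exp (n * δ / y) * y ^ n := by
      rw [mul_pow, ← Real.exp_nat_mul, mul_div_assoc, mul_comm]

theorem pow_le_exp_mul_pow_of_mem {V : Set ℝ} {bs c x y : ℝ} {n : ℕ} (hbs : 1 < bs) (hc : 0 < c)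
    (hV : V ⊆ Icc bs 2) (hVc : V.OrdConnected) (hd : ∀ t ∈ V, DifferentiableAt ℝ (φ n) t)
    (hlow : ∀ t ∈ V, c / 2 * bs ^ n ≤ |deriv (φ n) t|) (hx : x ∈ V) (hy : y ∈ V) :
    x ^ n ≤ Real.exp (4 / (c * bs * (bs - 1))) * y ^ n := by
  have hy₁ : bs ≤ y := (hV hy).1
  have hbs₁ : 0 < bs - 1 := by linarith
  have hy₀ : 0 < y := by linarith
  have hyn : 0 ≤ y ^ n := by positivity
  have hbsn : 0 < bs ^ n := by positivity
  rcases le_total x y with hxy | hyx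
  · calc x ^ n ≤ y ^ n := pow_le_pow_left₀ (by linarith [(hV hx).1]) hxy n
      _ ≤ _ := le_mul_of_one_le_left hyn (Real.one_le_exp (by positivity))
  have hmvt := mul_sub_le_abs_sub_of_le_abs_deriv hyx (fun t ht => hd t (hVc.out hy hx ht))
    fun t ht => hlow t (hVc.out hy hx ht)
  have hdiff : |φ n x - φ n y| ≤ 2 := by
    have := abs_φ_le_one (by linarith [(hV hx).1]) (hV hx).2 n
    have := abs_φ_le_one (by linarith) (hV hy).2 n
    linarith [abs_sub (φ n x) (φ n y)]
  have hδ : x ≤ y + 4 / (c * bs ^ n) := by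
    rw [← sub_le_iff_le_add', le_div_iff₀ (by positivity)]
    linarith
  have hbern : n * (bs - 1) ≤ bs ^ n := by
    have := one_add_mul_le_pow (by linarith : -2 ≤ bs - 1) n
    rw [add_sub_cancel] at this
    linarith
  calc x ^ n ≤ Real.exp (n * (4 / (c * bs ^ n)) / y) * y ^ n :=
        pow_le_exp_mul_pow (by linarith [(hV hx).1]) hy₀ hδ n
    _ ≤ Real.exp (4 / (c * bs * (bs - 1))) * y ^ n := by
      refine mul_le_mul_of_nonneg_right (Real.exp_le_exp.2 ?_) hyn
      rw [mul_div_assoc', div_div, div_le_div_iff₀ (by positivity) (by positivity)]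
      have := mul_le_mul hbern hy₁ (by positivity) hbsn.le
      nlinarith

/-- The exponential factor compares `b ^ n` with `b₀ ^ n` on `V`, see
`pow_le_exp_mul_pow_of_mem`. -/
noncomputable def derivRatioConst (c bs : ℝ) : ℝ :=
  Real.exp (4 / (c * bs * (bs - 1))) * (1 + 1 / (bs - 1) + 2 / c)

theorem one_le_derivRatioConst {c bs : ℝ} (hbs : 1 < bs) (hc : 0 < c) :
    1 ≤ derivRatioConst c bs := by
  have : 0 < 1 / (bs - 1) := one_div_pos.2 (sub_pos.2 hbs)
  have : 0 < 2 / c := by positivity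
  exact one_le_mul_of_one_le_of_one_le (Real.one_le_exp (by positivity)) (by linarith)

theorem DerivLowerBound.abs_deriv_φ_comparable {c D bs b b₀ : ℝ} {n : ℕ} {V : Set ℝ}
    (h : DerivLowerBound c D bs) (hbs : 1 < bs) (hc : 0 < c) (hn : 2 * D ≤ c * bs ^ n)
    (hV : V ⊆ Icc bs 2) (hVc : V.OrdConnected) (hd : ∀ x ∈ V, DifferentiableAt ℝ (φ n) x)
    (hb : b ∈ V) (hb₀ : b₀ ∈ V) :
    (derivRatioConst c bs)⁻¹ * b₀ ^ n ≤ |deriv (φ n) b| ∧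
      |deriv (φ n) b| ≤ derivRatioConst c bs * b₀ ^ n := by
  set R := Real.exp (4 / (c * bs * (bs - 1)))
  have hC : derivRatioConst c bs = R * (1 + 1 / (bs - 1) + 2 / c) := rfl
  have hR₀ : 0 < R := Real.exp_pos _
  have h₁ : 0 < 1 / (bs - 1) := one_div_pos.2 (sub_pos.2 hbs)
  have h₂ : 0 < 2 / c := by positivity
  rw [hC]
  have hbounds := fun x hx => h.abs_deriv_φ_mem_Icc hbs hc hn (hV hx) (hd x hx)
  have hpow : ∀ x ∈ V, ∀ y ∈ V, x ^ n ≤ R * y ^ n := fun x hx y hy =>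
    pow_le_exp_mul_pow_of_mem hbs hc hV hVc hd (fun t ht => (hbounds t ht).1.trans'
      (by gcongr; exact (hV ht).1)) hx hy
  have hb₀n : 0 ≤ b₀ ^ n := pow_nonneg (by linarith [(hV hb₀).1]) n
  have hR : 2 * R / c ≤ R * (1 + 1 / (bs - 1) + 2 / c) := by
    rw [mul_comm 2 R, mul_div_assoc]
    exact mul_le_mul_of_nonneg_left (by linarith) hR₀.le
  constructor
  · calc (R * (1 + 1 / (bs - 1) + 2 / c))⁻¹ * b₀ ^ n ≤ (2 * R / c)⁻¹ * (R * b ^ n) :=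
          mul_le_mul (inv_anti₀ (by positivity) hR) (hpow b₀ hb₀ b hb) hb₀n (by positivity)
      _ = c / 2 * b ^ n := by field_simp
      _ ≤ |deriv (φ n) b| := (hbounds b hb).1
  · calc |deriv (φ n) b| ≤ b ^ n / (bs - 1) := (hbounds b hb).2
      _ ≤ R * b₀ ^ n / (bs - 1) := by gcongr; exact hpow b hb b₀ hb₀
      _ = R * (1 / (bs - 1)) * b₀ ^ n := by ring
      _ ≤ R * (1 + 1 / (bs - 1) + 2 / c) * b₀ ^ n := by
          gcongr
          linarith

/-- Lemma (Brucks–Misiurewicz type estimate): given `b_* > 1`, there are constants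
`C ≥ 1` and `N ≥ 1` such that for `n ≥ N`: (i) for `b ∈ [b_*, 2]`, `φ_n` is differentiable
at `b` unless `φ_j(b) = 0` for some `1 ≤ j < n`; and (ii) if `V ⊆ [b_*, 2]` is an interval
on which `φ_n` is differentiable, then `C⁻¹·b₀ⁿ ≤ |φ_n'(b)| ≤ C·b₀ⁿ` for all `b, b₀ ∈ V`. -/
theorem tent_iterate_derivative_estimate (bs : ℝ) (hbs : 1 < bs) :
    ∃ C : ℝ, 1 ≤ C ∧ ∃ N : ℕ, 1 ≤ N ∧ ∀ n : ℕ, N ≤ n →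
      (∀ b ∈ Set.Icc bs 2, (∀ j, 1 ≤ j → j < n → φ j b ≠ 0) →
        DifferentiableAt ℝ (φ n) b) ∧
      (∀ V : Set ℝ, V ⊆ Set.Icc bs 2 → V.OrdConnected →
        (∀ b ∈ V, DifferentiableAt ℝ (φ n) b) →
        ∀ b ∈ V, ∀ b₀ ∈ V,
          C⁻¹ * b₀ ^ n ≤ |deriv (φ n) b| ∧ |deriv (φ n) b| ≤ C * b₀ ^ n) := by
  obtain ⟨c, D, hc, -, hL⟩ := DerivLowerBound.exists_of_one_lt hbs
  obtain ⟨N, hN⟩ := pow_unbounded_of_one_lt (2 * D / c) hbs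
  refine ⟨derivRatioConst c bs, one_le_derivRatioConst hbs hc, N + 1, by omega,
    fun n hn => ⟨fun b _ hreg => ?_, fun V hV hVc hd b hb b₀ hb₀ => ?_⟩⟩
  · refine (hasDerivAt_φ fun j hj => ?_).differentiableAt
    rcases j.eq_zero_or_pos with rfl | hj₁
    · exact one_ne_zero
    · exact hreg j hj₁ hj
  · have hDn : 2 * D ≤ c * bs ^ n := by
      rw [div_lt_iff₀ hc] at hN
      nlinarith [pow_le_pow_right₀ hbs.le (by omega : N ≤ n)]
    exact hL.abs_deriv_φ_comparable hbs hc hDn hV hVc hd hb hb₀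
end

section
/- Let T_b(x) = 1 − b|x| with b ∈ (1,2]. If T_b^k(0) = 0 for some k ≥ 1, then b^k ≥ 2√2. -/
open Set

/-! If `b ≥ √2`, the orbit `0, 1, 1 - b, …` of the turning point cannot return before time 3,
so `b ^ k ≥ √2 ^ 3 = 2√2`. If `b ≤ √2`, the interval `[-1/(b+1), 1/(b+1)]` is renormalizing:
`T_b` maps it to the right of `0` and `T_b²` acts on it as a rescaled copy of `T_{b²}`, namely
`T_b² ((1 - b) y) = (1 - b) T_{b²}(y)`. Hence the critical orbit only returns to `0` at even
times `2n`, with `T_{b²}^n(0) = 0`, and induction on `k` applies to the slope `b²`. -/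

section

variable {a b y : ℝ}

lemma abs_tent_le (ha : 1 < a) (ha' : a ≤ 2) (hy : |y| ≤ (a - 1)⁻¹) :
    |tent a y| ≤ (a - 1)⁻¹ := by
  have hc : a * (a - 1)⁻¹ = 1 + (a - 1)⁻¹ := by
    linear_combination mul_inv_cancel₀ (by linarith : a - 1 ≠ 0)
  have h1 : 1 ≤ (a - 1)⁻¹ := (one_le_inv₀ (by linarith)).2 (by linarith)
  have h2 : a * |y| ≤ a * (a - 1)⁻¹ := mul_le_mul_of_nonneg_left hy (by linarith)
  rw [tent, abs_le]
  constructor <;> nlinarith [abs_nonneg y]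

lemma tent_one_sub_mul_pos (hb : 1 < b) (hy : |y| ≤ (b ^ 2 - 1)⁻¹) : 0 < tent b ((1 - b) * y) := by
  have hy' : |y| * (b ^ 2 - 1) ≤ 1 :=
    (le_div_iff₀ (by nlinarith)).1 (by rwa [one_div])
  rw [tent, abs_mul, abs_of_neg (by linarith : 1 - b < 0)]
  nlinarith [abs_nonneg y]

lemma tent_tent_one_sub_mul (hb : 1 < b) (hy : |y| ≤ (b ^ 2 - 1)⁻¹) :
    tent b (tent b ((1 - b) * y)) = (1 - b) * tent (b ^ 2) y := by
  have hpos := tent_one_sub_mul_pos hb hy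
  rw [tent, abs_of_pos hpos]
  simp only [tent, abs_mul, abs_of_neg (by linarith : 1 - b < 0)]
  ring

lemma abs_iterate_tent_zero_le (ha : 1 < a) (ha' : a ≤ 2) (n : ℕ) :
    |(tent a)^[n] 0| ≤ (a - 1)⁻¹ := by
  induction n with
  | zero => simpa using (inv_pos.2 (by linarith : 0 < a - 1)).le
  | succ n ih => rw [Function.iterate_succ_apply']; exact abs_tent_le ha ha' ih

lemma iterate_tent_two_mul_zero (hb : 1 < b) (hb' : b ^ 2 ≤ 2) (n : ℕ) :
    (tent b)^[2 * n] 0 = (1 - b) * (tent (b ^ 2))^[n] 0 := by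
  induction n with
  | zero => simp
  | succ n ih =>
    rw [Nat.mul_succ, Function.iterate_succ_apply', Function.iterate_succ_apply', ih,
      Function.iterate_succ_apply',
      ← tent_tent_one_sub_mul hb (abs_iterate_tent_zero_le (by nlinarith) hb' n)]

lemma iterate_tent_two_mul_add_one_zero_pos (hb : 1 < b) (hb' : b ^ 2 ≤ 2) (n : ℕ) :
    0 < (tent b)^[2 * n + 1] 0 := by
  rw [Function.iterate_succ_apply', iterate_tent_two_mul_zero hb hb']
  exact tent_one_sub_mul_pos hb (abs_iterate_tent_zero_le (by nlinarith) hb' n)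

lemma three_le_of_iterate_tent_zero_eq_zero {k : ℕ} (hb : 1 < b) (hk : 1 ≤ k)
    (h : (tent b)^[k] 0 = 0) : 3 ≤ k := by
  by_contra! hk3
  interval_cases k <;> simp [tent] at h
  linarith

end

/-- Lemma: if `T_b^k(0) = 0` for some `k ≥ 1` and `b ∈ (1,2]`, then `b^k ≥ 2√2`. -/
theorem tent_periodic_critical_point_slope_bound (b : ℝ) (hb : b ∈ Set.Ioc (1 : ℝ) 2)
    (k : ℕ) (hk : 1 ≤ k) (hper : (tent b)^[k] 0 = 0) :
    2 * Real.sqrt 2 ≤ b ^ k := by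
  induction k using Nat.strong_induction_on generalizing b with
  | _ k ih =>
  obtain ⟨hb1, -⟩ := hb
  rcases le_or_gt (b ^ 2) 2 with hsq | hsq
  · obtain ⟨n, rfl | rfl⟩ := Nat.even_or_odd' k
    · rw [iterate_tent_two_mul_zero hb1 hsq, mul_eq_zero, sub_eq_zero] at hper
      rw [pow_mul]
      exact ih n (by omega) (b ^ 2) ⟨one_lt_pow₀ hb1 two_ne_zero, hsq⟩ (by omega)
        (hper.resolve_left hb1.ne)
    · exact absurd hper (iterate_tent_two_mul_add_one_zero_pos hb1 hsq n).ne'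
  · have hsqrt : Real.sqrt 2 ≤ b := Real.sqrt_le_iff.2 ⟨by linarith, hsq.le⟩
    calc 2 * Real.sqrt 2 = Real.sqrt 2 ^ 3 := by
          rw [pow_succ, Real.sq_sqrt zero_le_two]
      _ ≤ Real.sqrt 2 ^ k := pow_le_pow_right₀ Real.one_lt_sqrt_two.le
          (three_le_of_iterate_tent_zero_eq_zero hb1 hk hper)
      _ ≤ b ^ k := pow_le_pow_left₀ (Real.sqrt_nonneg 2) hsqrt k
end

section
/- Let b₀ ∈ (1,2] and suppose the turning point 0 is preperiodic under T_{b₀}: let N ≥ 0 and k ≥ 1 be minimal with T_{b₀}^{N+k}(0) = T_{b₀}^N(0), and set α := T_{b₀}^N(0). Then there exist constants C₁ ≥ 1 and l ≥ 1, an open neighbourhood U_α of α, and ε > 0 such that for every b ∈ (1,2] with |b − b₀| < ε the following holds: if n ≥ 1 and T_b^{N+jk}(0) ∈ U_α for all j = 1, …, n, then |log b₀ − log b| ≤ C₁ · b₀^{−nk/l}. -/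
/-!
Put `α = T_{b₀}^N(0)` and `ψ(b) = T_b^{N+k}(0) - T_b^N(0)`. By minimality, the `T_{b₀}`-orbit of
`0` does not return to `0` before time `N + k`, so for `b` near `b₀` the points `T_b^m(0)`,
`m ≤ N + k`, keep the signs they have at `b₀` and are polynomials in `b`. Hence `ψ` is a polynomial
with top coefficient `±1` vanishing at `b₀`, and `|ψ(b)| ≥ c |b - b₀|^d` near `b₀` with `d ≥ 1`.

If `N ≥ 1`, the orbit of `α` never meets `0`, so near `α` the map `T_b^k` is a similarity of ratio
`b^k`; the gaps between consecutive points `T_b^{N+jk}(0)` grow like `b^{kj} |ψ(b)|`, and a funnel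
of length `n` forces `|ψ(b)| ≲ b^{-kn}`. If `N = 0`, then `0` has period `k` and near `0` the map
`T_b^k` is the fold `y ↦ ψ(b) ± b^k |y|`; since `b₀^k > 2` (for `b² ≤ 2`, `T_b²` is conjugate to
`T_{b²}`), funnel points escape at rate `(b^k - 1)^n`. Either way `c |b - b₀|^d ≲ μ^{-n}` for some
`μ > 1`, and `|log b₀ - log b| ≤ |b - b₀|`.
-/

open Set

open Filter Topology Metric Polynomial

theorem Function.iterate_ne_self_of_minimal {α : Type*} {f : α → α} {x : α} {N k : ℕ}
    (hNk : f^[N + k] x = f^[N] x)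
    (hkmin : ∀ k', 1 ≤ k' → k' < k → f^[N + k'] x ≠ f^[N] x)
    (hNmin : ∀ N', N' < N → f^[N' + k] x ≠ f^[N'] x) {m : ℕ} (hm : 1 ≤ m) (hmk : m < N + k) :
    f^[m] x ≠ x := by
  intro (hx : Function.IsPeriodicPt f m x)
  have hper : f^[k] x = x := by
    have hmN : f^[m * N] x = x := (hx.mul_const N).eq
    have hNle : N ≤ m * N := Nat.le_mul_of_pos_left N hm
    calc f^[k] x = f^[m * N - N] (f^[N + k] x) := by
          rw [← Function.iterate_add_apply, show m * N - N + (N + k) = k + m * N by omega,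
            Function.iterate_add_apply, hmN]
      _ = x := by rw [hNk, ← Function.iterate_add_apply, Nat.sub_add_cancel hNle, hmN]
  rcases Nat.eq_zero_or_pos N with rfl | hN
  · exact hkmin m hm (by omega) (by simpa using hx.eq)
  · exact hNmin 0 hN (by simpa using hper)

theorem continuous_tent_iterate (i : ℕ) : Continuous fun p : ℝ × ℝ => (tent p.1)^[i] p.2 := by
  induction i with
  | zero => exact continuous_snd
  | succ i ih =>
    simp only [Function.iterate_succ_apply', tent]
    exact continuous_const.sub (continuous_fst.mul ih.abs)

theorem eventually_tent_iterate_mul_pos {b₀ a : ℝ} {i : ℕ} (h : (tent b₀)^[i] a ≠ 0) :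
    ∀ᶠ p : ℝ × ℝ in 𝓝 (b₀, a), 0 < (tent p.1)^[i] p.2 * (tent b₀)^[i] a :=
  (((continuous_tent_iterate i).mul continuous_const).tendsto (b₀, a)).eventually_const_lt
    (mul_self_pos.2 h)

theorem dist_tent_tent {b y y' : ℝ} (h : 0 ≤ y * y') :
    dist (tent b y) (tent b y') = |b| * dist y y' := by
  have hsq : (|y'| - |y|) ^ 2 = (y - y') ^ 2 := by
    rw [sub_sq, sub_sq, sq_abs, sq_abs, mul_assoc, ← abs_mul, abs_of_nonneg (by linarith [h])]
    ring
  rw [Real.dist_eq, Real.dist_eq, tent, tent, show 1 - b * |y| - (1 - b * |y'|) = b * (|y'| - |y|)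
    by ring, abs_mul, (sq_eq_sq_iff_abs_eq_abs _ _).1 hsq]

theorem dist_tent_iterate {b y y' : ℝ} {r : ℕ}
    (h : ∀ i < r, 0 ≤ (tent b)^[i] y * (tent b)^[i] y') :
    dist ((tent b)^[r] y) ((tent b)^[r] y') = |b| ^ r * dist y y' := by
  induction r with
  | zero => simp
  | succ r ih =>
    rw [Function.iterate_succ_apply', Function.iterate_succ_apply',
      dist_tent_tent (h r r.lt_succ_self), ih fun i hi => h i (by omega), pow_succ]
    ring

theorem exists_ball_dist_tent_iterate {b₀ a : ℝ} {r : ℕ} (ha : ∀ i < r, (tent b₀)^[i] a ≠ 0) :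
    ∃ ρ > 0, ∀ᶠ b in 𝓝 b₀, ∀ y ∈ ball a ρ, ∀ y' ∈ ball a ρ,
      dist ((tent b)^[r] y) ((tent b)^[r] y') = |b| ^ r * dist y y' := by
  have hpos : ∀ᶠ p : ℝ × ℝ in 𝓝 (b₀, a), ∀ i ∈ Iio r, 0 < (tent p.1)^[i] p.2 * (tent b₀)^[i] a :=
    (eventually_all_finite (finite_Iio r)).2 fun i hi => eventually_tent_iterate_mul_pos (ha i hi)
  obtain ⟨ρ, hρ, hball⟩ := Metric.eventually_nhds_iff.1 hpos
  refine ⟨ρ, hρ, Metric.eventually_nhds_iff.2 ⟨ρ, hρ, fun b hb y hy y' hy' => ?_⟩⟩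
  refine dist_tent_iterate fun i hi => ?_
  have h₁ := hball (y := (b, y)) (by rw [Prod.dist_eq]; exact max_lt hb hy) i hi
  have h₂ := hball (y := (b, y')) (by rw [Prod.dist_eq]; exact max_lt hb hy') i hi
  nlinarith [mul_pos h₁ h₂, sq_nonneg ((tent b₀)^[i] a)]

theorem abs_eq_ite_mul {y a : ℝ} (h : 0 < y * a) : |y| = (if a < 0 then -1 else 1) * y := by
  rcases pos_and_pos_or_neg_and_neg_of_mul_pos h with ⟨hy, ha⟩ | ⟨hy, ha⟩
  · simp [abs_of_pos hy, not_lt.2 ha.le]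
  · simp [abs_of_neg hy, ha]

theorem Polynomial.exists_mul_pow_rootMultiplicity_le_abs_eval {q : ℝ[X]} (hq : q ≠ 0) (b₀ : ℝ) :
    ∃ c > 0, ∀ᶠ b in 𝓝 b₀, c * |b - b₀| ^ q.rootMultiplicity b₀ ≤ |q.eval b| := by
  obtain ⟨r, hqr, hr⟩ := q.exists_eq_pow_rootMultiplicity_mul_and_not_dvd hq b₀
  set d := q.rootMultiplicity b₀
  have hr₀ : 0 < |r.eval b₀| := abs_pos.2 fun h => hr (dvd_iff_isRoot.2 h)
  refine ⟨|r.eval b₀| / 2, by positivity, ?_⟩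
  filter_upwards [(r.continuous.abs.tendsto b₀).eventually_const_lt (half_lt_self hr₀)] with b hb
  rw [hqr, eval_mul, eval_pow, eval_sub, eval_X, eval_C, abs_mul, abs_pow, mul_comm]
  exact mul_le_mul_of_nonneg_left hb.le (by positivity)

/-- The kneading signs of `T_{b₀}`, with the convention that `0` counts as positive. -/
noncomputable def kneadingSign (b₀ : ℝ) (i : ℕ) : ℝ := if (tent b₀)^[i] 0 < 0 then -1 else 1

/-- The polynomial in `b` equal to `T_b^m(0)` while each `T_b^i(0)`, `i < m`, has the sign `s i`. -/
noncomputable def orbitPoly (s : ℕ → ℝ) : ℕ → ℝ[X]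
  | 0 => 0
  | m + 1 => 1 - C (s m) * X * orbitPoly s m

theorem eval_orbitPoly {s : ℕ → ℝ} {b : ℝ} {m : ℕ}
    (h : ∀ i < m, |(tent b)^[i] 0| = s i * (tent b)^[i] 0) :
    (orbitPoly s m).eval b = (tent b)^[m] 0 := by
  induction m with
  | zero => simp [orbitPoly]
  | succ m ih =>
    rw [orbitPoly, Function.iterate_succ_apply', tent, h m m.lt_succ_self,
      ← ih fun i hi => h i (by omega)]
    simp only [eval_sub, eval_one, eval_mul, eval_C, eval_X]
    ring

theorem coeff_orbitPoly_of_le (s : ℕ → ℝ) {m i : ℕ} (h : m ≤ i) : (orbitPoly s m).coeff i = 0 := by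
  induction m generalizing i with
  | zero => simp [orbitPoly]
  | succ m ih =>
    obtain ⟨i, rfl⟩ : ∃ j, i = j + 1 := ⟨i - 1, by omega⟩
    rw [orbitPoly, coeff_sub, mul_assoc, coeff_C_mul, coeff_X_mul, ih (by omega), coeff_one]
    simp

theorem abs_coeff_orbitPoly {s : ℕ → ℝ} (hs : ∀ i, |s i| = 1) (m : ℕ) :
    |(orbitPoly s (m + 1)).coeff m| = 1 := by
  induction m with
  | zero => simp [orbitPoly]
  | succ m ih =>
    rw [orbitPoly, coeff_sub, mul_assoc, coeff_C_mul, coeff_X_mul, coeff_one]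
    simp [abs_mul, hs, ih]

theorem eventually_eval_orbitPoly_kneadingSign {b₀ : ℝ} {M : ℕ}
    (hne : ∀ m, 1 ≤ m → m < M → (tent b₀)^[m] 0 ≠ 0) :
    ∀ᶠ b in 𝓝 b₀, ∀ m ≤ M, (orbitPoly (kneadingSign b₀) m).eval b = (tent b)^[m] 0 := by
  have hsign : ∀ᶠ b in 𝓝 b₀, ∀ i ∈ Iio M,
      |(tent b)^[i] 0| = kneadingSign b₀ i * (tent b)^[i] 0 := by
    refine (eventually_all_finite (finite_Iio M)).2 fun i hi => ?_
    rcases Nat.eq_zero_or_pos i with rfl | hi₀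
    · simp
    · exact ((continuous_id.prodMk continuous_const).tendsto b₀).eventually
        (eventually_tent_iterate_mul_pos (hne i hi₀ hi)) |>.mono fun b hb => abs_eq_ite_mul hb
  exact hsign.mono fun b hb m hm => eval_orbitPoly fun i hi => hb i (mem_Iio.2 (by omega))

theorem exists_mul_pow_le_abs_tent_iterate_sub {b₀ : ℝ} {N M : ℕ}
    (hne : ∀ m, 1 ≤ m → m < M → (tent b₀)^[m] 0 ≠ 0) (hNM : N < M)
    (hM : (tent b₀)^[M] 0 = (tent b₀)^[N] 0) :
    ∃ d, 1 ≤ d ∧ ∃ c > 0, ∀ᶠ b in 𝓝 b₀, c * |b - b₀| ^ d ≤ |(tent b)^[M] 0 - (tent b)^[N] 0| := by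
  have heval := eventually_eval_orbitPoly_kneadingSign hne
  set ψ := orbitPoly (kneadingSign b₀) M - orbitPoly (kneadingSign b₀) N
  have hψ : ψ ≠ 0 := by
    obtain ⟨M, rfl⟩ : ∃ M', M = M' + 1 := ⟨M - 1, by omega⟩
    have hs : ∀ i, |kneadingSign b₀ i| = 1 := fun i => by
      unfold kneadingSign; split_ifs <;> simp
    intro h
    have := abs_coeff_orbitPoly hs M
    rw [sub_eq_zero.1 h, coeff_orbitPoly_of_le _ (by omega)] at this
    simp at this
  have hroot : ψ.IsRoot b₀ := by
    simp [ψ, heval.self_of_nhds M le_rfl, heval.self_of_nhds N hNM.le, hM]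
  obtain ⟨c, hc, hbound⟩ := ψ.exists_mul_pow_rootMultiplicity_le_abs_eval hψ b₀
  refine ⟨_, (rootMultiplicity_pos hψ).2 hroot, c, hc, ?_⟩
  filter_upwards [hbound, heval] with b hb hev
  simpa [ψ, hev M le_rfl, hev N hNM.le] using hb

theorem mapsTo_tent_Icc {b : ℝ} (hb₀ : 0 ≤ b) (hb : b ≤ 2) :
    MapsTo (tent b) (Icc (-1) 1) (Icc (-1) 1) := fun y hy => by
  have hy' := abs_le.2 hy
  constructor <;> simp only [tent] <;> nlinarith [abs_nonneg y]

theorem tent_tent_neg_mul {b y : ℝ} (hb : 1 ≤ b) (hb2 : b ^ 2 ≤ 2) (hy : |y| ≤ 1) :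
    tent b (tent b (-(b - 1) * y)) = -(b - 1) * tent (b ^ 2) y := by
  have habs : |-(b - 1) * y| = (b - 1) * |y| := by
    rw [abs_mul, abs_neg, abs_of_nonneg (by linarith)]
  have hpos : 0 ≤ 1 - b * ((b - 1) * |y|) := by
    nlinarith [mul_le_mul_of_nonneg_left hy (by nlinarith : 0 ≤ b * (b - 1))]
  simp only [tent]
  rw [habs, abs_of_nonneg hpos]
  ring

theorem tent_iterate_two_mul_zero {b : ℝ} (hb : 1 ≤ b) (hb2 : b ^ 2 ≤ 2) (j : ℕ) :
    (tent b)^[2 * j] 0 = -(b - 1) * (tent (b ^ 2))^[j] 0 := by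
  suffices h : ∀ y, |y| ≤ 1 → (tent b)^[2 * j] (-(b - 1) * y) = -(b - 1) * (tent (b ^ 2))^[j] y by
    simpa using h 0 (by simp)
  induction j with
  | zero => simp
  | succ j ih =>
    intro y hy
    rw [show 2 * (j + 1) = 2 * j + 1 + 1 by ring, Function.iterate_succ_apply,
      Function.iterate_succ_apply, tent_tent_neg_mul hb hb2 hy,
      ih _ (abs_le.2 (mapsTo_tent_Icc (by positivity) hb2 (abs_le.1 hy))),
      Function.iterate_succ_apply]

theorem two_lt_pow_of_tent_iterate_eq_zero {b : ℝ} (hb : 1 < b) (hb2 : b ≤ 2) {m : ℕ}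
    (hm : 1 ≤ m) (h : (tent b)^[m] 0 = 0) : 2 < b ^ m := by
  induction m using Nat.strong_induction_on generalizing b with
  | _ m ih =>
    by_cases hsq : 2 < b ^ 2
    · have hm1 : m ≠ 1 := by rintro rfl; simp [tent] at h
      exact hsq.trans_le (pow_le_pow_right₀ hb.le (by omega))
    rw [not_lt] at hsq
    rcases Nat.even_or_odd' m with ⟨j, rfl | rfl⟩
    · rw [tent_iterate_two_mul_zero hb.le hsq, mul_eq_zero] at h
      rw [pow_mul]
      exact ih j (by omega) (one_lt_pow₀ hb two_ne_zero) hsq (by omega)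
        (h.resolve_left (by linarith))
    · exfalso
      have hz : |(tent (b ^ 2))^[j] 0| ≤ 1 :=
        abs_le.2 (((mapsTo_tent_Icc (by positivity) hsq).iterate j) (by norm_num))
      rw [Function.iterate_succ_apply', tent_iterate_two_mul_zero hb.le hsq, tent, abs_mul,
        abs_neg, abs_of_pos (by linarith : 0 < b - 1)] at h
      nlinarith [mul_le_mul_of_nonneg_left hz (by nlinarith : 0 ≤ b * (b - 1))]

theorem dist_succ_eq_pow_mul_dist {X : Type*} [PseudoMetricSpace X] {g : X → X} {U : Set X}
    {c : ℝ} (hg : ∀ y ∈ U, ∀ y' ∈ U, dist (g y) (g y') = c * dist y y') {x : ℕ → X}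
    (hx : ∀ j, x (j + 1) = g (x j)) {n : ℕ} (hU : ∀ j ≤ n, x j ∈ U) :
    dist (x (n + 1)) (x n) = c ^ n * dist (x 1) (x 0) := by
  induction n with
  | zero => simp
  | succ n ih =>
    calc dist (x (n + 1 + 1)) (x (n + 1)) = dist (g (x (n + 1))) (g (x n)) := by rw [← hx, ← hx]
      _ = c * dist (x (n + 1)) (x n) := hg _ (hU _ le_rfl) _ (hU _ (by omega))
      _ = c ^ (n + 1) * dist (x 1) (x 0) := by
        rw [ih fun j hj => hU j (by omega), pow_succ]
        ring

theorem pow_mul_abs_le_abs_of_abs_sub_eq {c : ℝ} (hc : 2 ≤ c) {y : ℕ → ℝ} {n : ℕ}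
    (hy : ∀ i < n, |y (i + 1) - y 0| = c * |y i|) : (c - 1) ^ n * |y 0| ≤ |y n| := by
  suffices |y 0| ≤ |y n| ∧ (c - 1) ^ n * |y 0| ≤ |y n| from this.2
  induction n with
  | zero => simp
  | succ n ih =>
    obtain ⟨h₀, hn⟩ := ih fun i hi => hy i (by omega)
    have hstep : (c - 1) * |y n| ≤ |y (n + 1)| := by
      nlinarith [hy n n.lt_succ_self, abs_sub (y (n + 1)) (y 0)]
    refine ⟨by nlinarith [abs_nonneg (y n)], ?_⟩
    rw [pow_succ]
    nlinarith

theorem abs_log_sub_log_le_abs_sub {x y : ℝ} (hx : 1 ≤ x) (hy : 1 ≤ y) :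
    |Real.log x - Real.log y| ≤ |x - y| := by
  wlog hxy : y ≤ x generalizing x y
  · rw [abs_sub_comm, abs_sub_comm x]
    exact this hy hx (le_of_not_ge hxy)
  have hy₀ : 0 < y := by linarith
  have hlog := Real.log_le_sub_one_of_pos (div_pos (by linarith : 0 < x) hy₀)
  rw [Real.log_div (by linarith : 0 < x).ne' hy₀.ne'] at hlog
  rw [abs_of_nonneg (sub_nonneg.2 (Real.log_le_log hy₀ hxy)), abs_of_nonneg (sub_nonneg.2 hxy)]
  calc Real.log x - Real.log y ≤ x / y - 1 := hlog
    _ = (x - y) / y := by field_simp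
    _ ≤ x - y := div_le_self (sub_nonneg.2 hxy) hy

theorem one_le_rpow_pow_mul_pow {b₀ μ : ℝ} (hb₀ : 0 < b₀) (hμ : 0 ≤ μ) {k d l : ℕ} (hl : 0 < l)
    (h : b₀ ^ (k * d) ≤ μ ^ l) (n : ℕ) :
    1 ≤ (b₀ ^ (-((n * k : ℕ) : ℝ) / l)) ^ d * μ ^ n := by
  have hb : (b₀ ^ (-((n * k : ℕ) : ℝ) / l)) ^ d = ((b₀ ^ (k * d)) ^ ((n : ℝ) / l))⁻¹ := by
    rw [← Real.rpow_mul_natCast hb₀.le, ← Real.rpow_natCast b₀ (k * d), ← Real.rpow_mul hb₀.le,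
      ← Real.rpow_neg hb₀.le]
    congr 1
    push_cast
    ring
  have hμn : μ ^ n = (μ ^ l) ^ ((n : ℝ) / l) := by
    rw [← Real.rpow_natCast_mul hμ, mul_div_cancel₀ _ (by positivity), Real.rpow_natCast]
  rw [hb, hμn, inv_mul_eq_div, one_le_div (by positivity)]
  exact Real.rpow_le_rpow (by positivity) h (by positivity)

theorem exists_abs_log_sub_le {b₀ μ c A : ℝ} {d : ℕ} (hb₀ : 1 < b₀) (hμ : 1 < μ) (hd : 1 ≤ d)
    (hc : 0 < c) (k : ℕ) :
    ∃ C₁, 1 ≤ C₁ ∧ ∃ l : ℕ, 1 ≤ l ∧ ∀ b, 1 ≤ b → ∀ n : ℕ, c * |b - b₀| ^ d * μ ^ n ≤ A →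
      |Real.log b₀ - Real.log b| ≤ C₁ * b₀ ^ (-((n * k : ℕ) : ℝ) / l) := by
  obtain ⟨l, hl⟩ := pow_unbounded_of_one_lt (b₀ ^ (k * d)) hμ
  set C := max 1 (A / c)
  refine ⟨C, le_max_left _ _, max l 1, le_max_right _ _, fun b hb n hbound => ?_⟩
  set X := b₀ ^ (-((n * k : ℕ) : ℝ) / (max l 1 : ℕ))
  have hX : 1 ≤ X ^ d * μ ^ n := one_le_rpow_pow_mul_pow (by linarith) (by linarith)
    (by omega) (hl.le.trans (pow_le_pow_right₀ hμ.le (le_max_left _ _))) n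
  have hμn : 0 < μ ^ n := by positivity
  have hC : 0 ≤ C := zero_le_one.trans (le_max_left _ _)
  have hdist : |b - b₀| ≤ C * X := by
    refine (pow_le_pow_iff_left₀ (abs_nonneg _) (by positivity) (by omega : d ≠ 0)).1 ?_
    calc |b - b₀| ^ d ≤ A / c / μ ^ n := by
          rw [le_div_iff₀ hμn, le_div_iff₀ hc]
          linarith
      _ ≤ C * X ^ d := by
          rw [div_le_iff₀ hμn]
          calc A / c ≤ C := le_max_right _ _
            _ ≤ C * (X ^ d * μ ^ n) := le_mul_of_one_le_right hC hX
            _ = C * X ^ d * μ ^ n := by ring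
      _ ≤ C ^ d * X ^ d := by gcongr; exact le_self_pow₀ (le_max_left _ _) (by omega)
      _ = (C * X) ^ d := (mul_pow _ _ _).symm
  calc |Real.log b₀ - Real.log b| ≤ |b₀ - b| := abs_log_sub_log_le_abs_sub hb₀.le hb
    _ = |b - b₀| := abs_sub_comm _ _
    _ ≤ C * X := hdist

def FunnelDecay (b₀ : ℝ) (N k : ℕ) (U : Set ℝ) : Prop :=
  ∃ μ > 1, ∃ A, ∀ᶠ b in 𝓝 b₀, b ∈ Ioc 1 2 → ∀ n, 1 ≤ n →
    (∀ j ∈ Icc 1 n, (tent b)^[N + j * k] 0 ∈ U) →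
      |(tent b)^[N + k] 0 - (tent b)^[N] 0| * μ ^ n ≤ A

theorem exists_funnelDecay_of_ne_zero {b₀ : ℝ} (hb₀ : 1 < b₀) {N k : ℕ} (hk : 1 ≤ k)
    (hne : ∀ i < k, (tent b₀)^[i] ((tent b₀)^[N] 0) ≠ 0) :
    ∃ U, IsOpen U ∧ (tent b₀)^[N] 0 ∈ U ∧ FunnelDecay b₀ N k U := by
  obtain ⟨ρ, hρ, hsim⟩ := exists_ball_dist_tent_iterate hne
  set β := (1 + b₀) / 2 with hβ
  refine ⟨ball _ ρ, isOpen_ball, mem_ball_self hρ, β, by linarith, β * (2 * ρ), ?_⟩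
  have hstart : ∀ᶠ b in 𝓝 b₀, (tent b)^[N] 0 ∈ ball ((tent b₀)^[N] 0) ρ :=
    (((continuous_tent_iterate N).comp (continuous_id.prodMk continuous_const)).tendsto
      b₀).eventually_mem (ball_mem_nhds _ hρ)
  filter_upwards [hsim, hstart, eventually_gt_nhds (show β < b₀ by linarith)]
    with b hsim hstart hβb hb n hn hU
  set x : ℕ → ℝ := fun j => (tent b)^[N + j * k] 0
  have hx : ∀ j, x (j + 1) = (tent b)^[k] (x j) := fun j => by
    simp only [x]
    rw [← Function.iterate_add_apply]
    congr 1
    ring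
  have hxU : ∀ j ≤ n, x j ∈ ball ((tent b₀)^[N] 0) ρ := by
    intro j hj
    rcases Nat.eq_zero_or_pos j with rfl | hj₀
    · simpa [x] using hstart
    · exact hU j ⟨hj₀, hj⟩
  obtain ⟨m, rfl⟩ : ∃ m, n = m + 1 := ⟨n - 1, by omega⟩
  have hgrow := dist_succ_eq_pow_mul_dist hsim hx (n := m) fun j hj => hxU j (by omega)
  have hlast : dist (x (m + 1)) (x m) < 2 * ρ := by
    have h₁ := hxU (m + 1) le_rfl
    have h₂ := hxU m (by omega)
    rw [mem_ball] at h₁ h₂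
    linarith [dist_triangle_right (x (m + 1)) (x m) ((tent b₀)^[N] 0)]
  have hβm : β ^ m ≤ (|b| ^ k) ^ m := by
    rw [abs_of_pos (by linarith [hb.1])]
    exact pow_le_pow_left₀ (by positivity) (hβb.le.trans (le_self_pow₀ hb.1.le (by omega))) m
  have hdefect : |(tent b)^[N + k] 0 - (tent b)^[N] 0| = dist (x 1) (x 0) := by
    simp [x, Real.dist_eq]
  calc |(tent b)^[N + k] 0 - (tent b)^[N] 0| * β ^ (m + 1)
      = β * (β ^ m * dist (x 1) (x 0)) := by rw [hdefect]; ring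
    _ ≤ β * ((|b| ^ k) ^ m * dist (x 1) (x 0)) := by gcongr
    _ = β * dist (x (m + 1)) (x m) := by rw [hgrow]
    _ ≤ β * (2 * ρ) := by gcongr

theorem exists_ball_dist_tent_iterate_zero {b₀ : ℝ} {k : ℕ} (hk : 1 ≤ k)
    (hne : ∀ m, 1 ≤ m → m < k → (tent b₀)^[m] 0 ≠ 0) :
    ∃ ρ > 0, ∀ᶠ b in 𝓝 b₀, b ∈ Icc 0 2 → ∀ y ∈ ball 0 ρ,
      dist ((tent b)^[k] y) ((tent b)^[k] 0) = b ^ k * |y| := by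
  have h₀ : ∀ b, tent b 0 = 1 := by simp [tent]
  obtain ⟨k, rfl⟩ : ∃ k', k = k' + 1 := ⟨k - 1, by omega⟩
  have hne₁ : ∀ i < k, (tent b₀)^[i] 1 ≠ 0 := fun i hi => by
    simpa [Function.iterate_succ_apply, h₀] using hne (i + 1) (by omega) (by omega)
  obtain ⟨ρ, hρ, hsim⟩ := exists_ball_dist_tent_iterate hne₁
  refine ⟨ρ / 2, by positivity, hsim.mono fun b hsim hb y hy => ?_⟩
  have hdist : dist (tent b y) 1 = b * |y| := by
    simp [tent, abs_of_nonneg hb.1]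
  rw [mem_ball, dist_zero_right, Real.norm_eq_abs] at hy
  have hy₁ : tent b y ∈ ball 1 ρ := by
    rw [mem_ball, hdist]
    nlinarith [hb.2, abs_nonneg y]
  rw [Function.iterate_succ_apply, Function.iterate_succ_apply, h₀, hsim _ hy₁ _ (mem_ball_self hρ),
    hdist, abs_of_nonneg hb.1, pow_succ]
  ring

theorem exists_funnelDecay_of_periodic {b₀ : ℝ} (hb₀ : b₀ ∈ Ioc 1 2) {k : ℕ} (hk : 1 ≤ k)
    (hk₀ : (tent b₀)^[k] 0 = 0) (hne : ∀ m, 1 ≤ m → m < k → (tent b₀)^[m] 0 ≠ 0) :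
    ∃ U, IsOpen U ∧ (0 : ℝ) ∈ U ∧ FunnelDecay b₀ 0 k U := by
  have h₂ : 2 < b₀ ^ k := two_lt_pow_of_tent_iterate_eq_zero hb₀.1 hb₀.2 hk hk₀
  obtain ⟨ρ, hρ, hfold⟩ := exists_ball_dist_tent_iterate_zero hk hne
  -- any `μ` strictly between `1` and `b₀ ^ k - 1` would do
  set μ := b₀ ^ k / 2 with hμ
  have hμb : ∀ᶠ b in 𝓝 b₀, μ + 1 < b ^ k :=
    ((continuous_pow k).tendsto b₀).eventually_const_lt (by linarith)
  refine ⟨ball 0 ρ, isOpen_ball, mem_ball_self hρ, μ, by linarith, μ * ρ, ?_⟩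
  filter_upwards [hfold, hμb] with b hfold hμb hb n hn hU
  set y : ℕ → ℝ := fun i => (tent b)^[(i + 1) * k] 0
  have hyU : ∀ i < n, |y i| < ρ := fun i hi => by
    simpa [y] using hU (i + 1) ⟨by omega, by omega⟩
  have hy : ∀ i < n - 1, |y (i + 1) - y 0| = b ^ k * |y i| := fun i hi => by
    rw [← hfold ⟨by linarith [hb.1], hb.2⟩ (y i) (by simpa using hyU i (by omega)), Real.dist_eq]
    simp only [y, zero_add, one_mul]
    rw [← Function.iterate_add_apply, show k + (i + 1) * k = (i + 1 + 1) * k by ring]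
  have hgrow := pow_mul_abs_le_abs_of_abs_sub_eq (by linarith) hy
  obtain ⟨m, rfl⟩ : ∃ m, n = m + 1 := ⟨n - 1, by omega⟩
  have hdefect : |(tent b)^[0 + k] 0 - (tent b)^[0] 0| = |y 0| := by simp [y]
  calc |(tent b)^[0 + k] 0 - (tent b)^[0] 0| * μ ^ (m + 1) = μ * (μ ^ m * |y 0|) := by
        rw [hdefect]; ring
    _ ≤ μ * ((b ^ k - 1) ^ m * |y 0|) := by gcongr; linarith
    _ ≤ μ * ρ := by
        gcongr
        simpa using hgrow.trans (hyU m (by omega)).le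

/-- Lemma: let `0` be preperiodic under `T_{b₀}`, with minimal `N ≥ 0`, `k ≥ 1` such that
`T_{b₀}^{N+k}(0) = T_{b₀}^N(0) =: α`.  There are `C₁ ≥ 1`, `l ≥ 1`, a neighbourhood `U_α`
of `α` and `ε > 0` such that for `b ∈ (1,2]` with `|b − b₀| < ε`: if `n ≥ 1` and
`T_b^{N+jk}(0) ∈ U_α` for `j = 1, …, n`, then `|log b₀ − log b| ≤ C₁ · b₀^{−nk/l}`. -/
theorem tent_parabolic_funnel_estimate (b₀ : ℝ) (hb₀ : b₀ ∈ Set.Ioc (1 : ℝ) 2)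
    (N k : ℕ) (hk : 1 ≤ k)
    (hNk : (tent b₀)^[N + k] 0 = (tent b₀)^[N] 0)
    (hkmin : ∀ k', 1 ≤ k' → k' < k → (tent b₀)^[N + k'] 0 ≠ (tent b₀)^[N] 0)
    (hNmin : ∀ N', N' < N → (tent b₀)^[N' + k] 0 ≠ (tent b₀)^[N'] 0) :
    ∃ C₁ : ℝ, 1 ≤ C₁ ∧ ∃ l : ℕ, 1 ≤ l ∧ ∃ U : Set ℝ, IsOpen U ∧ (tent b₀)^[N] 0 ∈ U ∧
      ∃ ε : ℝ, 0 < ε ∧ ∀ b ∈ Set.Ioc (1 : ℝ) 2, |b - b₀| < ε →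
        ∀ n : ℕ, 1 ≤ n → (∀ j ∈ Set.Icc 1 n, (tent b)^[N + j * k] 0 ∈ U) →
          |Real.log b₀ - Real.log b| ≤ C₁ * b₀ ^ (-((n * k : ℕ) : ℝ) / (l : ℝ)) := by
  have hne : ∀ m, 1 ≤ m → m < N + k → (tent b₀)^[m] 0 ≠ 0 := fun m hm hmk =>
    Function.iterate_ne_self_of_minimal hNk hkmin hNmin hm hmk
  obtain ⟨d, hd, c, hc, hdefect⟩ := exists_mul_pow_le_abs_tent_iterate_sub hne (by omega) hNk
  obtain ⟨U, hUo, hαU, μ, hμ, A, hdecay⟩ : ∃ U, IsOpen U ∧ (tent b₀)^[N] 0 ∈ U ∧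
      FunnelDecay b₀ N k U := by
    rcases Nat.eq_zero_or_pos N with rfl | hN
    · exact exists_funnelDecay_of_periodic hb₀ hk (by simpa using hNk) (by simpa using hne)
    · refine exists_funnelDecay_of_ne_zero hb₀.1 hk fun i hi => ?_
      rw [← Function.iterate_add_apply]
      exact hne _ (by omega) (by omega)
  obtain ⟨C₁, hC₁, l, hl, hlog⟩ := exists_abs_log_sub_le hb₀.1 hμ hd hc (A := A) k
  obtain ⟨ε, hε, hnear⟩ := Metric.eventually_nhds_iff.1 (hdefect.and hdecay)
  refine ⟨C₁, hC₁, l, hl, U, hUo, hαU, ε, hε, fun b hb hbε n hn hU => hlog b hb.1.le n ?_⟩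
  obtain ⟨hlower, hupper⟩ := hnear (by rwa [Real.dist_eq])
  calc c * |b - b₀| ^ d * μ ^ n ≤ |(tent b)^[N + k] 0 - (tent b)^[N] 0| * μ ^ n := by gcongr
    _ ≤ A := hupper hb n hn hU
end

section
/- Let 0 < δ < 1 and let ρ : (−2δ, 2δ) × [0, 2δ²) → ℝ, (x,t) ↦ ρ_t(x), be a C² map such that each ρ_t is a diffeomorphism onto its image (ρ_t is injective with nowhere-vanishing derivative on (−2δ, 2δ)). Assume ρ_0(0) = 0, ρ_0'(0) = 1, and ρ_0(x) < x for all x ∈ (0, δ]. Then there exist ε₀ > 0, t₀ > 0 and C > 1 such that for all t ∈ [0, t₀] and all x ∈ (√t, ε₀), one has ρ_t^n(x) ∈ (0, ε₀) for every integer n with 0 ≤ n ≤ 1/(C√t) (in particular all these iterates are defined and remain in (0, ε₀)). -/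
/-!
By Taylor's formula `ρ₀ y ≥ y - K y²` near `0`, and `|ρ_t y - ρ₀ y| ≤ L t` by Lipschitz continuity
in `t`. While an orbit stays above `√t / 2`, the perturbation `L t ≤ 4 L y²` is absorbed into the
quadratic term, so `ρ_t y ≥ y - K' y²` and `1 / y` grows by at most `2 K'` per step. After
`n ≤ 1 / (2 K' √t)` steps this gives `1 / y ≤ 1 / x + 1 / √t ≤ 2 / √t`, so the orbit does stay above
`√t / 2`. It cannot leave through `ε₀` either: below `ε₀ / 2` a step moves points by less than
`ε₀ / 2`, and on `[ε₀ / 2, ε₀]` the map `ρ₀` pushes points down by a uniform `η > L t`.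
-/

open Set

theorem ContDiffOn.exists_abs_sub_taylor_one_le {f : ℝ → ℝ} {U : Set ℝ} {a b : ℝ}
    (hf : ContDiffOn ℝ 2 f U) (hU : IsOpen U) (hab : a < b) (habU : Icc a b ⊆ U) :
    ∃ K, 0 < K ∧ ∀ x ∈ Icc a b, |f x - f a - deriv f a * (x - a)| ≤ K * (x - a) ^ 2 := by
  have hf' : ContDiffOn ℝ 2 f (Icc a b) := hf.mono habU
  obtain ⟨C, hC⟩ := isCompact_Icc.exists_bound_of_continuousOn
    (hf'.continuousOn_iteratedDerivWithin le_rfl (uniqueDiffOn_Icc hab))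
  have hderiv : derivWithin f (Icc a b) a = deriv f a :=
    ((hf.contDiffAt (hU.mem_nhds (habU (left_mem_Icc.2 hab.le)))).differentiableAt
      two_ne_zero).derivWithin ((uniqueDiffOn_Icc hab) a (left_mem_Icc.2 hab.le))
  refine ⟨max C 0 + 1, by positivity, fun x hx => ?_⟩
  have := taylor_mean_remainder_bound (n := 1) hab.le hf' hx
    (fun y hy => (hC y hy).trans ((le_max_left C 0).trans (le_add_of_nonneg_right zero_le_one)))
  simpa [hderiv, sub_sub, mul_comm] using this

theorem exists_abs_sub_le_mul_of_contDiffOn_prod {ρ : ℝ → ℝ → ℝ} {s : Set ℝ} {T : ℝ}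
    (hρ : ContDiffOn ℝ 1 (fun q : ℝ × ℝ => ρ q.2 q.1) (s ×ˢ Icc 0 T))
    (hs : Convex ℝ s) (hs' : IsCompact s) :
    ∃ L, 0 < L ∧ ∀ x ∈ s, ∀ t ∈ Icc 0 T, |ρ t x - ρ 0 x| ≤ L * t := by
  obtain ⟨L, hL⟩ := hρ.exists_lipschitzOnWith one_ne_zero (hs.prod (convex_Icc 0 T))
    (hs'.prod isCompact_Icc)
  refine ⟨L + 1, by positivity, fun x hx t ht => ?_⟩
  have hdist : dist (ρ t x) (ρ 0 x) ≤ L * dist (x, t) (x, (0 : ℝ)) :=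
    hL.dist_le_mul (x, t) ⟨hx, ht⟩ (x, 0) ⟨hx, left_mem_Icc.2 (ht.1.trans ht.2)⟩
  have hxt : dist (x, t) (x, (0 : ℝ)) = t := by
    simp [Prod.dist_eq, abs_of_nonneg ht.1, ht.1]
  rw [hxt, Real.dist_eq] at hdist
  nlinarith [ht.1]

theorem inv_le_inv_add_of_sub_mul_sq_le {y z K : ℝ} (hy : 0 < y) (hK : 0 ≤ K)
    (hKy : K * y ≤ 1 / 2) (hz : y - K * y ^ 2 ≤ z) : 0 < z ∧ z⁻¹ ≤ y⁻¹ + 2 * K := by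
  have hz0 : 0 < z := by nlinarith
  refine ⟨hz0, ?_⟩
  rw [inv_le_iff_one_le_mul₀ hz0]
  -- `(1 - u) (1 + 2u) = 1 + u (1 - 2u) ≥ 1` for `u = K y ∈ [0, 1/2]`
  have hu : 0 ≤ K * y * (1 - 2 * (K * y)) := mul_nonneg (mul_nonneg hK hy.le) (by linarith)
  have key : y * (1 - K * y) * (y⁻¹ + 2 * K) = 1 + K * y * (1 - 2 * (K * y)) := by
    field_simp; ring
  have hpos : 0 ≤ y⁻¹ + 2 * K := by positivity
  calc (1 : ℝ) ≤ y * (1 - K * y) * (y⁻¹ + 2 * K) := by linarith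
    _ = (y⁻¹ + 2 * K) * (y * (1 - K * y)) := by ring
    _ ≤ (y⁻¹ + 2 * K) * z := by gcongr; linarith

def IsFunnel (f : ℝ → ℝ) (ε K s : ℝ) : Prop :=
  ∀ y ∈ Ioo 0 ε, s ≤ 2 * y → y - K * y ^ 2 ≤ f y ∧ f y < ε

namespace IsFunnel

variable {f : ℝ → ℝ} {ε K s x : ℝ}

theorem iterate_mem_Ioo_and_inv_le (hf : IsFunnel f ε K s) (hK : 0 ≤ K) (hKε : K * ε ≤ 1 / 2)
    (hs : 0 ≤ s) (hx : x ∈ Ioo s ε) :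
    ∀ n : ℕ, 2 * K * n * s ≤ 1 → f^[n] x ∈ Ioo 0 ε ∧ (f^[n] x)⁻¹ ≤ x⁻¹ + 2 * K * n := by
  have hx0 : 0 < x := hs.trans_lt hx.1
  intro n
  induction n with
  | zero => intro; simpa using ⟨hx0, hx.2⟩
  | succ n ih =>
    intro hn
    push_cast at hn ⊢
    obtain ⟨⟨hy0, hyε⟩, hyinv⟩ := ih (by nlinarith)
    set y := f^[n] x
    have hsy : s ≤ 2 * y := by
      have hsx : s * x⁻¹ ≤ 1 := by rw [← div_eq_mul_inv, div_le_one hx0]; exact hx.1.le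
      have : s * y⁻¹ ≤ 2 := by nlinarith
      rw [← div_eq_mul_inv, div_le_iff₀ hy0] at this
      linarith
    obtain ⟨hlow, hup⟩ := hf y ⟨hy0, hyε⟩ hsy
    obtain ⟨hfy0, hfyinv⟩ := inv_le_inv_add_of_sub_mul_sq_le hy0 hK (by nlinarith) hlow
    rw [Function.iterate_succ_apply']
    exact ⟨⟨hfy0, hup⟩, by linarith⟩

end IsFunnel

theorem isFunnel_of_abs_sub_le {f₀ f : ℝ → ℝ} {ε K L t η : ℝ} (hL : 0 ≤ L)
    (hquad : ∀ y ∈ Ioo 0 ε, y - K * y ^ 2 ≤ f₀ y) (hbelow : ∀ y ∈ Ioo 0 ε, f₀ y < y)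
    (hgap : ∀ y ∈ Icc (ε / 2) ε, η ≤ y - f₀ y) (hclose : ∀ y ∈ Ioo 0 ε, |f y - f₀ y| ≤ L * t)
    (hLη : L * t < η) (hLε : L * t ≤ ε / 2) :
    IsFunnel f ε (K + 4 * L) √t := by
  intro y hy hty
  have ht : t ≤ 4 * y ^ 2 := by nlinarith [(Real.sqrt_le_iff.1 hty).2]
  obtain ⟨hlo, hhi⟩ := abs_le.1 (hclose y hy)
  refine ⟨by nlinarith [hquad y hy, mul_le_mul_of_nonneg_left ht hL], ?_⟩
  rcases lt_or_ge y (ε / 2) with hyε | hyε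
  · linarith [hbelow y hy]
  · linarith [hgap y ⟨hyε, hy.2.le⟩, hy.2]

theorem exists_forall_isFunnel {f₀ : ℝ → ℝ} {F : ℝ → ℝ → ℝ} {ε K L T : ℝ} (hε : 0 < ε)
    (hL : 0 < L) (hT : 0 < T) (hf₀ : ContinuousOn f₀ (Icc (ε / 2) ε))
    (hquad : ∀ y ∈ Ioo 0 ε, y - K * y ^ 2 ≤ f₀ y) (hbelow : ∀ y ∈ Ioc 0 ε, f₀ y < y)
    (hclose : ∀ t ∈ Icc 0 T, ∀ y ∈ Ioo 0 ε, |F t y - f₀ y| ≤ L * t) :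
    ∃ t₀, 0 < t₀ ∧ ∀ t ∈ Icc 0 t₀, IsFunnel (F t) ε (K + 4 * L) √t := by
  obtain ⟨η, hη, hgap⟩ := isCompact_Icc.exists_forall_le' (continuousOn_id.sub hf₀)
    fun y hy => sub_pos.2 (hbelow y ⟨by linarith [hy.1], hy.2⟩)
  refine ⟨min T (min η ε / (2 * L)), by positivity, fun t ht => ?_⟩
  have hLt : L * t ≤ min η ε / 2 := by
    calc L * t ≤ L * (min η ε / (2 * L)) := by gcongr; exact ht.2.trans (min_le_right _ _)
      _ = min η ε / 2 := by field_simp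
  exact isFunnel_of_abs_sub_le hL.le hquad (fun y hy => hbelow y ⟨hy.1, hy.2.le⟩) hgap
    (hclose t ⟨ht.1, ht.2.trans (min_le_left _ _)⟩)
    (by linarith [min_le_left η ε]) (by linarith [min_le_right η ε])

theorem parabolic_funnel_general (δ : ℝ) (hδ : 0 < δ) (ρ : ℝ → ℝ → ℝ)
    -- ρ, as a function of (x, t), is C² on (−2δ, 2δ) × [0, 2δ²); here `ρ t x = ρ_t(x)`
    (hC2 : ContDiffOn ℝ 2 (fun q : ℝ × ℝ => ρ q.2 q.1)
      (Set.Ioo (-(2 * δ)) (2 * δ) ×ˢ Set.Ico 0 (2 * δ ^ 2)))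
    (hfix : ρ 0 0 = 0) (hder : deriv (ρ 0) 0 = 1)
    (hbelow : ∀ x ∈ Set.Ioc (0 : ℝ) δ, ρ 0 x < x) :
    ∃ ε₀ : ℝ, 0 < ε₀ ∧ ∃ t₀ : ℝ, 0 < t₀ ∧ ∃ C : ℝ, 1 < C ∧
      ∀ t ∈ Set.Icc (0 : ℝ) t₀, ∀ x ∈ Set.Ioo (Real.sqrt t) ε₀,
        ∀ n : ℕ, (n : ℝ) * (C * Real.sqrt t) ≤ 1 →
          (ρ t)^[n] x ∈ Set.Ioo (0 : ℝ) ε₀ := by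
  have hIccU : Icc 0 δ ⊆ Ioo (-(2 * δ)) (2 * δ) := Icc_subset_Ioo (by linarith) (by linarith)
  have hρ₀ : ContDiffOn ℝ 2 (ρ 0) (Ioo (-(2 * δ)) (2 * δ)) :=
    hC2.comp (contDiff_id.prodMk contDiff_const).contDiffOn
      fun x hx => ⟨hx, le_rfl, by positivity⟩
  obtain ⟨K, hK, hquad⟩ := hρ₀.exists_abs_sub_taylor_one_le isOpen_Ioo hδ hIccU
  obtain ⟨L, hL, hclose⟩ := exists_abs_sub_le_mul_of_contDiffOn_prod (T := δ ^ 2)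
    ((hC2.mono (prod_mono hIccU (Icc_subset_Ico_right (by nlinarith)))).of_le one_le_two)
    (convex_Icc 0 δ) isCompact_Icc
  set K' := K + 4 * L
  have hK' : 0 < K' := by positivity
  set ε := min δ (1 / (2 * K'))
  have hε : 0 < ε := by positivity
  have hεδ : Ioc 0 ε ⊆ Icc 0 δ := fun y hy => ⟨hy.1.le, hy.2.trans (min_le_left _ _)⟩
  have hK'ε : K' * ε ≤ 1 / 2 := by
    calc K' * ε ≤ K' * (1 / (2 * K')) := by gcongr; exact min_le_right _ _
      _ = 1 / 2 := by field_simp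
  obtain ⟨t₀, ht₀, hfunnel⟩ := exists_forall_isFunnel hε hL (by positivity)
    (hρ₀.continuousOn.mono fun y hy => hIccU (hεδ ⟨by linarith [hy.1], hy.2⟩))
    (fun y hy => by simpa [hfix, hder] using (abs_le.1 (hquad y (hεδ (Ioo_subset_Ioc_self hy)))).1)
    (fun y hy => hbelow y ⟨hy.1, (hεδ hy).2⟩)
    (fun t ht y hy => hclose y (hεδ (Ioo_subset_Ioc_self hy)) t ht)
  refine ⟨ε, hε, t₀, ht₀, 2 * K' + 1, by linarith, fun t ht x hx n hn => ?_⟩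
  exact ((hfunnel t ht).iterate_mem_Ioo_and_inv_le hK'.le hK'ε (Real.sqrt_nonneg t) hx n
    (by nlinarith [Real.sqrt_nonneg t])).1

/-- Lemma (parabolic funnel): let `ρ : (x,t) ↦ ρ_t(x)` be a C² family on
`(−2δ, 2δ) × [0, 2δ²)` of diffeomorphisms onto their images, with `ρ_0(0) = 0`,
`ρ_0'(0) = 1` and `ρ_0(x) < x` on `(0, δ]`.  Then there are `ε₀, t₀ > 0` and `C > 1` such
that for `t ∈ [0, t₀]` and `x ∈ (√t, ε₀)`, all iterates `ρ_t^n(x)` with `n ≤ 1/(C√t)`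
(i.e. `n·C·√t ≤ 1`) remain in `(0, ε₀)`. -/
theorem parabolic_funnel (δ : ℝ) (hδ : 0 < δ) (hδ1 : δ < 1) (ρ : ℝ → ℝ → ℝ)
    -- ρ, as a function of (x, t), is C² on (−2δ, 2δ) × [0, 2δ²); here `ρ t x = ρ_t(x)`
    (hC2 : ContDiffOn ℝ 2 (fun q : ℝ × ℝ => ρ q.2 q.1)
      (Set.Ioo (-(2 * δ)) (2 * δ) ×ˢ Set.Ico 0 (2 * δ ^ 2)))
    -- each ρ_t is a diffeomorphism onto its image
    (hdiffeo : ∀ t ∈ Set.Ico (0 : ℝ) (2 * δ ^ 2),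
      Set.InjOn (ρ t) (Set.Ioo (-(2 * δ)) (2 * δ)) ∧
      ∀ x ∈ Set.Ioo (-(2 * δ)) (2 * δ), deriv (ρ t) x ≠ 0)
    (hfix : ρ 0 0 = 0) (hder : deriv (ρ 0) 0 = 1)
    (hbelow : ∀ x ∈ Set.Ioc (0 : ℝ) δ, ρ 0 x < x) :
    ∃ ε₀ : ℝ, 0 < ε₀ ∧ ∃ t₀ : ℝ, 0 < t₀ ∧ ∃ C : ℝ, 1 < C ∧
      ∀ t ∈ Set.Icc (0 : ℝ) t₀, ∀ x ∈ Set.Ioo (Real.sqrt t) ε₀,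
        ∀ n : ℕ, (n : ℝ) * (C * Real.sqrt t) ≤ 1 →
          (ρ t)^[n] x ∈ Set.Ioo (0 : ℝ) ε₀ :=
  parabolic_funnel_general δ hδ ρ hC2 hfix hder hbelow
end

section
/- Let E ⊆ ℝ, let u : E → ℝ, and let α > 0. Define the α-flat set F(u, α) := {x ∈ E : liminf_{y→x, y ∈ E, y ≠ x} log|u(y) − u(x)| / log|y − x| ≥ α}. If A ⊆ F(u, α), then the Hausdorff dimension of u(A) satisfies dim_H(u(A)) ≤ dim_H(A)/α. -/
open Filter Set MeasureTheory

/-- The `α`-flat set of `u : E → ℝ`: points `x ∈ E` where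
`liminf_{y→x, y∈E, y≠x} log|u(y) − u(x)| / log|y − x| ≥ α`, with the convention
`log 0 = −∞` (so points `y` with `u(y) = u(x)` contribute `+∞` to the quotient and do not
obstruct the condition). -/
noncomputable def flatSet (E : Set ℝ) (u : ℝ → ℝ) (α : ℝ) : Set ℝ :=
  {x ∈ E | (α : EReal) ≤
    Filter.liminf
      (fun y : ℝ =>
        if u y = u x then (⊤ : EReal)
        else ((Real.log |u y - u x| / Real.log |y - x| : ℝ) : EReal))
      (nhdsWithin x (E \ {x}))}

/-!
For `β < α`, the liminf condition says that near a flat point `x` we have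
`|u y - u x| ≤ |y - x| ^ β`. This estimate is anchored at `x` only, so it is not a Hölder
condition; but on the set of points where it holds at a uniform scale `n⁻¹`, any two points at
distance `< n⁻¹` satisfy it, so `u` is `β`-Hölder on small balls there. Countably many such pieces
cover `A`, whence `dim_H u(A) ≤ dim_H A / β`, and we let `β ↑ α`.
-/

open scoped ENNReal NNReal Topology

theorem ENNReal.le_div_coe_of_forall_lt {a b : ℝ≥0∞} {c : ℝ≥0} (hc : 0 < c)
    (h : ∀ r : ℝ≥0, 0 < r → r < c → a ≤ b / r) : a ≤ b / c := by
  rw [ENNReal.le_div_iff_mul_le (.inl (by simpa using hc.ne')) (.inl coe_ne_top)]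
  refine ENNReal.mul_le_of_forall_lt fun a' ha' c' hc' => ?_
  lift c' to ℝ≥0 using (hc'.trans coe_lt_top).ne
  rcases eq_or_ne c' 0 with rfl | hc'₀
  · simp
  have hr := h c' (pos_iff_ne_zero.2 hc'₀) (by exact_mod_cast hc')
  rw [ENNReal.le_div_iff_mul_le (.inl (by simpa using hc'₀)) (.inl coe_ne_top)] at hr
  exact (mul_le_mul_left ha'.le _).trans hr

section PointwiseHolder

variable {X Y : Type*} [EMetricSpace X] [EMetricSpace Y] {C r : ℝ≥0} {f : X → Y} {s : Set X}

theorem holderOnWith_inter_eball_of_forall_edist_lt {δ : ℝ≥0∞}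
    (hf : ∀ x ∈ s, ∀ y ∈ s, edist y x < δ → edist (f y) (f x) ≤ C * edist y x ^ (r : ℝ))
    (z : X) : HolderOnWith C r f (s ∩ Metric.eball z (δ / 2)) := by
  intro x hx y hy
  refine hf y hy.1 x hx.1 ?_
  calc edist x y ≤ edist x z + edist y z := edist_triangle_right _ _ _
    _ < δ / 2 + δ / 2 := ENNReal.add_lt_add hx.2 hy.2
    _ = δ := ENNReal.add_halves δ

theorem dimH_image_le_of_forall_eventually_edist_le [SecondCountableTopology X] (hr : 0 < r)
    (hf : ∀ x ∈ s, ∀ᶠ y in 𝓝[s] x, edist (f y) (f x) ≤ C * edist y x ^ (r : ℝ)) :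
    dimH (f '' s) ≤ dimH s / r := by
  set S : ℕ → Set X := fun n => {x ∈ s | ∀ y ∈ s, edist y x < (n : ℝ≥0∞)⁻¹ →
    edist (f y) (f x) ≤ C * edist y x ^ (r : ℝ)}
  have hcover : s ⊆ ⋃ n, S n := by
    intro x hx
    obtain ⟨ε, hε, hball⟩ := EMetric.mem_nhdsWithin_iff.1 (hf x hx)
    obtain ⟨n, hn⟩ := ENNReal.exists_inv_nat_lt hε.ne'
    exact mem_iUnion.2 ⟨n, hx, fun y hy hyx => hball ⟨hyx.trans hn, hy⟩⟩
  have hS : ∀ n, dimH (f '' S n) ≤ dimH s / r := fun n => by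
    have hδ : (0 : ℝ≥0∞) < (n : ℝ≥0∞)⁻¹ / 2 :=
      ENNReal.half_pos (ENNReal.inv_ne_zero.2 (ENNReal.natCast_ne_top n))
    have hhold := holderOnWith_inter_eball_of_forall_edist_lt (s := S n)
      fun x (hx : x ∈ S n) y hy => hx.2 y hy.1
    calc dimH (f '' S n) ≤ dimH (S n) / r := dimH_image_le_of_locally_holder_on hr fun x _ =>
          ⟨C, _, inter_mem_nhdsWithin _ (Metric.eball_mem_nhds x hδ), hhold x⟩
      _ ≤ dimH s / r := ENNReal.div_le_div_right (dimH_mono fun _ hx => hx.1) _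
  calc dimH (f '' s) ≤ dimH (⋃ n, f '' S n) := dimH_mono (image_iUnion ▸ image_mono hcover)
    _ = ⨆ n, dimH (f '' S n) := dimH_iUnion _
    _ ≤ dimH s / r := iSup_le hS

end PointwiseHolder

theorem Real.lt_rpow_of_lt_log_div_log {a t β : ℝ} (ha : 0 < a) (ht₀ : 0 < t) (ht₁ : t < 1)
    (h : β < Real.log a / Real.log t) : a < t ^ β := by
  rw [← Real.log_lt_log_iff ha (Real.rpow_pos_of_pos ht₀ β), Real.log_rpow ht₀]
  exact (lt_div_iff_of_neg (Real.log_neg ht₀ ht₁)).1 h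

theorem eventually_abs_sub_le_rpow_of_mem_flatSet {E : Set ℝ} {u : ℝ → ℝ} {α β x : ℝ}
    (hx : x ∈ flatSet E u α) (hβα : β < α) :
    ∀ᶠ y in 𝓝[E] x, |u y - u x| ≤ |y - x| ^ β := by
  have hquot := eventually_lt_of_lt_liminf ((EReal.coe_lt_coe_iff.2 hβα).trans_le hx.2)
  have hnear : ∀ᶠ y in 𝓝[E \ {x}] x, |y - x| < 1 :=
    nhdsWithin_le_nhds (Metric.ball_mem_nhds x one_pos)
  have hpunct : ∀ᶠ y in 𝓝[E \ {x}] x, |u y - u x| ≤ |y - x| ^ β := by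
    filter_upwards [hquot, hnear, self_mem_nhdsWithin] with y hq hy1 hyE
    have hyx : 0 < |y - x| := abs_pos.2 (sub_ne_zero.2 hyE.2)
    by_cases hu : u y = u x
    · rw [hu, sub_self, abs_zero]
      positivity
    rw [if_neg hu, EReal.coe_lt_coe_iff] at hq
    exact (Real.lt_rpow_of_lt_log_div_log (abs_pos.2 (sub_ne_zero.2 hu)) hyx hy1 hq).le
  refine nhdsWithin_mono x (subset_insert_sdiff_singleton x E)
    (mem_nhdsWithin_insert.2 ⟨?_, hpunct⟩)
  simp only [mem_ofPred_eq, sub_self, abs_zero]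
  positivity

/-- Lemma: if `A ⊆ F(u, α)`, then `dim_H(u(A)) ≤ dim_H(A)/α`. -/
theorem dimH_image_le_of_flat (E : Set ℝ) (u : ℝ → ℝ) (α : ℝ) (hα : 0 < α)
    (A : Set ℝ) (hA : A ⊆ flatSet E u α) :
    dimH (u '' A) ≤ dimH A / ENNReal.ofReal α := by
  refine ENNReal.le_div_coe_of_forall_lt (Real.toNNReal_pos.2 hα) fun r hr hrα => ?_
  refine dimH_image_le_of_forall_eventually_edist_le (C := 1) hr fun x hx => ?_
  have hAE : A ⊆ E := fun y hy => (hA hy).1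
  filter_upwards [nhdsWithin_mono x hAE <| eventually_abs_sub_le_rpow_of_mem_flatSet (hA hx)
    (Real.lt_toNNReal_iff_coe_lt.1 hrα)] with y hy
  rw [edist_dist, edist_dist, Real.dist_eq, Real.dist_eq, ENNReal.coe_one, one_mul,
    ENNReal.ofReal_rpow_of_nonneg (abs_nonneg _) r.coe_nonneg]
  exact ENNReal.ofReal_le_ofReal hy
end

section
/- Let C ≥ 1, γ ≥ 1 and let g : ℝ → ℝ be a C¹ map whose derivative satisfies |g'(x)| ≤ min(C|x|, γ) for all x ∈ ℝ. Let n ≥ 0. If |g^{n+1}(0)| ≤ (1/4) C^{-1} γ^{-n}, then g^{n+1} has an attracting fixed point: there exists p with |p| ≤ (1/2) C^{-1} γ^{-n}, g^{n+1}(p) = p, and |(g^{n+1})'(p)| ≤ 1/2. Equivalently, if g has no such attracting periodic point of period dividing n+1, then |g^{n+1}(0)| > (1/4) C^{-1} γ^{-n}. -/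
open Set

/-! On the interval `|x| ≤ r` with `r = (1/2) C⁻¹ γ⁻ⁿ`, the chain rule bounds the derivative of
`g^{n+1}` by `γⁿ · C|x| ≤ 1/2`: the first factor `g'(x)` is small because `x` is close to the
critical point `0`, the other `n` factors are at most `γ`. Hence `g^{n+1}` is a `1/2`-contraction
there, and since `g^{n+1}(0)` lies within `r/2` of the centre, it maps the interval into itself;
the intermediate value theorem then yields the fixed point. -/

section Iterate

variable {𝕜 : Type*} [NontriviallyNormedField 𝕜] {g : 𝕜 → 𝕜}

theorem deriv_iterate_succ (hg : Differentiable 𝕜 g) (m : ℕ) (x : 𝕜) :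
    deriv g^[m + 1] x = deriv g^[m] (g x) * deriv g x := by
  rw [Function.iterate_succ]
  exact deriv_comp x ((hg.iterate m) (g x)) (hg x)

theorem norm_deriv_iterate_le (hg : Differentiable 𝕜 g) {γ : ℝ}
    (hγ : ∀ y, ‖deriv g y‖ ≤ γ) (m : ℕ) (y : 𝕜) : ‖deriv g^[m] y‖ ≤ γ ^ m := by
  induction m generalizing y with
  | zero => simp
  | succ m ih =>
    rw [deriv_iterate_succ hg, norm_mul, pow_succ]
    have hγ0 : 0 ≤ γ := (norm_nonneg _).trans (hγ y)
    exact mul_le_mul (ih (g y)) (hγ y) (norm_nonneg _) (by positivity)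

end Iterate

theorem mapsTo_Icc_of_abs_deriv_le {f : ℝ → ℝ} {r K : ℝ}
    (hf : ∀ x ∈ Icc (-r) r, DifferentiableAt ℝ f x) (hK : ∀ x ∈ Icc (-r) r, |deriv f x| ≤ K)
    (hf0 : |f 0| ≤ (1 - K) * r) : MapsTo f (Icc (-r) r) (Icc (-r) r) := by
  intro x hx
  have hr : 0 ≤ r := by linarith [hx.1, hx.2]
  have hK0 : 0 ≤ K := (abs_nonneg _).trans (hK x hx)
  have hlip : |f x - f 0| ≤ K * |x| := by
    simpa using (convex_Icc (-r) r).norm_image_sub_le_of_norm_deriv_le hf hK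
      ⟨neg_nonpos.2 hr, hr⟩ hx
  have hxr : |x| ≤ r := abs_le.2 hx
  refine abs_le.1 ?_
  calc |f x| ≤ |f x - f 0| + |f 0| := by simpa using abs_sub_le (f x) (f 0) 0
    _ ≤ K * r + (1 - K) * r := add_le_add (hlip.trans (by gcongr)) hf0
    _ = r := by ring

theorem attracting_fixed_point_of_close_return_general (C γ : ℝ)
    (g : ℝ → ℝ) (hg : ContDiff ℝ 1 g)
    (hder : ∀ x : ℝ, |deriv g x| ≤ min (C * |x|) γ) (n : ℕ)
    (hclose : |g^[n + 1] 0| ≤ 1 / 4 * C⁻¹ * (γ ^ n)⁻¹) :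
    ∃ p : ℝ, |p| ≤ 1 / 2 * C⁻¹ * (γ ^ n)⁻¹ ∧ g^[n + 1] p = p ∧
      |deriv (g^[n + 1]) p| ≤ 1 / 2 := by
  have hgd : Differentiable ℝ g := hg.differentiable one_ne_zero
  have hC : 0 ≤ C := by simpa using (abs_nonneg _).trans ((hder 1).trans (min_le_left _ _))
  have hγ : 0 ≤ γ := (abs_nonneg _).trans ((hder 0).trans (min_le_right _ _))
  set r := 1 / 2 * C⁻¹ * (γ ^ n)⁻¹ with hr
  have hcontract : ∀ x ∈ Icc (-r) r, |deriv g^[n + 1] x| ≤ 1 / 2 := by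
    intro x hx
    rw [deriv_iterate_succ hgd, abs_mul]
    calc |deriv g^[n] (g x)| * |deriv g x| ≤ γ ^ n * (C * r) :=
          mul_le_mul (norm_deriv_iterate_le hgd (fun y ↦ (hder y).trans (min_le_right _ _)) n _)
            ((hder x).trans ((min_le_left _ _).trans (by gcongr; exact abs_le.2 hx)))
            (abs_nonneg _) (by positivity)
      _ = 1 / 2 * (C * C⁻¹) * (γ ^ n * (γ ^ n)⁻¹) := by ring
      _ ≤ 1 / 2 * 1 * 1 := by gcongr <;> exact mul_inv_le_one
      _ = 1 / 2 := by norm_num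
  have hmaps : MapsTo g^[n + 1] (Icc (-r) r) (Icc (-r) r) :=
    mapsTo_Icc_of_abs_deriv_le (fun x _ ↦ hgd.iterate _ x) hcontract (by linarith)
  obtain ⟨p, hp, hfix⟩ := exists_mem_Icc_isFixedPt_of_mapsTo
    (hg.continuous.iterate _).continuousOn (by simp only [neg_le_self_iff, hr]; positivity) hmaps
  exact ⟨p, abs_le.2 hp, hfix, hcontract p hp⟩

/-- Lemma (Przytycki): let `g` be C¹ with `|g'(x)| ≤ min(C|x|, γ)` for all `x`.  If
`|g^{n+1}(0)| ≤ (1/4)·C⁻¹·γ^{−n}`, then `g^{n+1}` has an attracting fixed point `p` with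
`|p| ≤ (1/2)·C⁻¹·γ^{−n}` and `|(g^{n+1})'(p)| ≤ 1/2`. -/
theorem attracting_fixed_point_of_close_return (C γ : ℝ) (hC : 1 ≤ C) (hγ : 1 ≤ γ)
    (g : ℝ → ℝ) (hg : ContDiff ℝ 1 g)
    (hder : ∀ x : ℝ, |deriv g x| ≤ min (C * |x|) γ) (n : ℕ)
    (hclose : |g^[n + 1] 0| ≤ 1 / 4 * C⁻¹ * (γ ^ n)⁻¹) :
    ∃ p : ℝ, |p| ≤ 1 / 2 * C⁻¹ * (γ ^ n)⁻¹ ∧ g^[n + 1] p = p ∧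
      |deriv (g^[n + 1]) p| ≤ 1 / 2 :=
  attracting_fixed_point_of_close_return_general C γ g hg hder n hclose
end
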